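/- arXiv:1312.0269 — 7 statements merged into one kernel-verified Lean document; each statement's English description precedes it below -/
import Mathlib

section
/- The number of Lukasiewicz paths with n steps equals the n-th Catalan number C_n = (2n)!/(n!(n+1)!). -/
/-- A Lukasiewicz path with `n` steps: a sequence `j_0, ..., j_n` of integers with
`j_0 = 0`, `j_n = 0`, `j_m ≥ 0` for all `m`, and each step `j_m - j_{m-1} ≥ -1`. -/
def IsLukPath (n : ℕ) (j : Fin (n + 1) → ℤ) : Prop :=
  j 0 = 0 ∧ j (Fin.last n) = 0 ∧ (∀ m, 0 ≤ j m) ∧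
    ∀ m : Fin n, -1 ≤ j m.succ - j m.castSucc

/-!
Replacing each step `s ≥ -1` of a Lukasiewicz path by the word `U^(s+1) D` gives a bijection
onto the Dyck words of semilength `n`. After the first `m` blocks the Dyck word sits at height
exactly `j_m`, and inside a block it only climbs, so nonnegativity of the path is the prefix
condition of a Dyck word. Dyck words of semilength `n` are counted by `catalan n`.
-/

open List DyckStep

theorem catalan_eq_factorial_div (n : ℕ) :
    catalan n = (2 * n).factorial / (n.factorial * (n + 1).factorial) := by
  have h := Nat.choose_mul_factorial_mul_factorial (show n ≤ 2 * n by omega)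
  rw [show 2 * n - n = n by omega] at h
  rw [catalan_eq_centralBinom_div, Nat.centralBinom, ← h, Nat.factorial_succ,
    show n.factorial * ((n + 1) * n.factorial) = (n + 1) * (n.factorial * n.factorial) by ring,
    mul_assoc, Nat.mul_div_mul_right _ _ (by positivity)]

def dyckEncode : List ℕ → List DyckStep
  | [] => []
  | a :: l => replicate a U ++ D :: dyckEncode l

@[simp] lemma dyckEncode_nil : dyckEncode [] = [] := rfl

@[simp] lemma dyckEncode_cons (a : ℕ) (l : List ℕ) :
    dyckEncode (a :: l) = replicate a U ++ D :: dyckEncode l := rfl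

@[simp] lemma count_U_dyckEncode (l : List ℕ) : (dyckEncode l).count U = l.sum := by
  induction l with
  | nil => rfl
  | cons a l ih => simp [ih]

@[simp] lemma count_D_dyckEncode (l : List ℕ) : (dyckEncode l).count D = l.length := by
  induction l with
  | nil => rfl
  | cons a l ih => simp [count_replicate, ih]

lemma dyckEncode_append (l₁ l₂ : List ℕ) :
    dyckEncode (l₁ ++ l₂) = dyckEncode l₁ ++ dyckEncode l₂ := by
  induction l₁ with
  | nil => rfl
  | cons a l ih => simp [ih]

lemma dyckEncode_injective : Function.Injective dyckEncode := by
  intro l₁ l₂ h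
  induction l₁ generalizing l₂ with
  | nil => cases l₂ <;> simp_all
  | cons a l₁ ih =>
    cases l₂ with
    | nil => simp at h
    | cons b l₂ =>
      have hidx : ∀ c (w : List DyckStep), idxOf D (replicate c U ++ D :: w) = c := fun c w => by
        rw [idxOf_append_of_notMem (by simp)]; simp
      have hab := congrArg (idxOf D) h
      simp only [dyckEncode_cons, hidx] at hab
      subst hab
      simp only [dyckEncode_cons, append_cancel_left_eq, cons.injEq, true_and] at h
      rw [ih h]

lemma exists_dyckEncode_eq (w : List DyckStep) (hw : w.getLast? ≠ some U) :
    ∃ l, dyckEncode l = w := by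
  induction w with
  | nil => exact ⟨[], rfl⟩
  | cons s w ih =>
    obtain ⟨l, rfl⟩ := ih (by cases w <;> simp_all)
    cases s with
    | D => exact ⟨0 :: l, rfl⟩
    | U =>
      cases l with
      | nil => simp at hw
      | cons a l => exact ⟨(a + 1) :: l, by simp [replicate_succ]⟩

lemma take_dyckEncode (l : List ℕ) (i : ℕ) :
    ∃ m ≤ l.length, ∃ k, (dyckEncode l).take i = dyckEncode (l.take m) ++ replicate k U := by
  induction l generalizing i with
  | nil => exact ⟨0, le_rfl, 0, by simp⟩
  | cons a l ih =>
    rcases le_or_gt i a with hia | hia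
    · refine ⟨0, Nat.zero_le _, i, ?_⟩
      simp [take_append, take_replicate, hia]
    · obtain ⟨i, rfl⟩ : ∃ i', i = a + 1 + i' := ⟨i - a - 1, by omega⟩
      obtain ⟨m, hm, k, hk⟩ := ih i
      refine ⟨m + 1, by simpa using hm, k, ?_⟩
      simp [take_append, hk, show a + 1 + i - a = i + 1 by omega, hia.le]

/-- `l` lists the numbers `j_m - j_{m-1} + 1` of a Lukasiewicz path, so that
`(l.take m).sum = j_m + m`. -/
def IsLukWord (n : ℕ) (l : List ℕ) : Prop :=
  l.length = n ∧ l.sum = n ∧ ∀ m ≤ n, m ≤ (l.take m).sum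

def IsLukWord.toDyckWord {n : ℕ} {l : List ℕ} (hl : IsLukWord n l) : DyckWord where
  toList := dyckEncode l
  count_U_eq_count_D := by simp [hl.1, hl.2.1]
  count_D_le_count_U i := by
    obtain ⟨m, hm, k, hk⟩ := take_dyckEncode l i
    have := hl.2.2 m (hl.1 ▸ hm)
    rw [hk, count_append, count_append, count_U_dyckEncode, count_D_dyckEncode,
      count_replicate_self, count_eq_zero.2 (by simp), length_take, min_eq_left hm]
    omega

lemma IsLukWord.semilength_toDyckWord {n : ℕ} {l : List ℕ} (hl : IsLukWord n l) :
    hl.toDyckWord.semilength = n := by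
  simp [DyckWord.semilength, IsLukWord.toDyckWord, hl.2.1]

lemma DyckWord.getLast?_ne_some_U (p : DyckWord) : p.toList.getLast? ≠ some U := by
  rcases eq_or_ne p.toList [] with h | h
  · simp [h]
  · simp [getLast?_eq_some_getLast h, p.getLast_eq_D]

lemma DyckWord.exists_isLukWord_dyckEncode_eq (p : DyckWord) :
    ∃ l, IsLukWord p.semilength l ∧ dyckEncode l = p.toList := by
  obtain ⟨l, hl⟩ := exists_dyckEncode_eq _ p.getLast?_ne_some_U
  have hlen : l.length = p.semilength := by
    rw [p.semilength_eq_count_D, ← hl, count_D_dyckEncode]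
  refine ⟨l, ⟨hlen, by rw [DyckWord.semilength, ← hl, count_U_dyckEncode], fun m hm => ?_⟩, hl⟩
  have hsplit : dyckEncode l = dyckEncode (l.take m) ++ dyckEncode (l.drop m) := by
    rw [← dyckEncode_append, take_append_drop]
  have := p.count_D_le_count_U (dyckEncode (l.take m)).length
  rwa [← hl, hsplit, take_left, count_D_dyckEncode, count_U_dyckEncode, length_take,
    min_eq_left (hlen ▸ hm)] at this

theorem card_isLukWord (n : ℕ) : Nat.card {l : List ℕ // IsLukWord n l} = catalan n := by
  rw [← DyckWord.card_dyckWord_semilength_eq_catalan, ← Nat.card_eq_fintype_card]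
  refine Nat.card_eq_of_bijective (fun l => ⟨l.2.toDyckWord, l.2.semilength_toDyckWord⟩)
    ⟨fun l₁ l₂ h => Subtype.ext (dyckEncode_injective (congrArg (fun p => p.1.toList) h)),
      fun ⟨p, hp⟩ => ?_⟩
  obtain ⟨l, hl, henc⟩ := p.exists_isLukWord_dyckEncode_eq
  subst hp
  exact ⟨⟨l, hl⟩, Subtype.ext (DyckWord.ext henc)⟩

section

variable {n : ℕ}

def lukWord (j : Fin (n + 1) → ℤ) : List ℕ :=
  ofFn fun i : Fin n => (j i.succ - j i.castSucc + 1).toNat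

def lukPathOfWord (n : ℕ) (l : List ℕ) : Fin (n + 1) → ℤ :=
  fun m => ((l.take m).sum : ℤ) - m

lemma sum_take_lukWord {j : Fin (n + 1) → ℤ} (hstep : ∀ m : Fin n, -1 ≤ j m.succ - j m.castSucc)
    (m : Fin (n + 1)) : (((lukWord j).take m).sum : ℤ) = j m - j 0 + m := by
  induction m using Fin.induction with
  | zero => simp
  | succ i ih =>
    have hi := hstep i
    rw [Fin.val_castSucc] at ih
    rw [Fin.val_succ, sum_take_succ _ _ (by simp [lukWord]), Nat.cast_add, ih]
    simp only [lukWord, List.getElem_ofFn, Fin.eta]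
    rw [Int.toNat_of_nonneg (by omega)]
    push_cast
    ring

lemma IsLukPath.lukPathOfWord_lukWord {j : Fin (n + 1) → ℤ} (hj : IsLukPath n j) :
    lukPathOfWord n (lukWord j) = j := by
  ext m
  simp [lukPathOfWord, sum_take_lukWord hj.2.2.2, hj.1]

lemma lukWord_lukPathOfWord {l : List ℕ} (hl : l.length = n) :
    lukWord (lukPathOfWord n l) = l := by
  refine ext_getElem (by simp [lukWord, hl]) fun i _ hi => ?_
  simp only [lukWord, lukPathOfWord, List.getElem_ofFn, Fin.val_succ, Fin.val_castSucc,
    sum_take_succ _ _ hi]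
  push_cast
  convert Int.toNat_natCast l[i] using 2
  ring

lemma IsLukPath.isLukWord_lukWord {j : Fin (n + 1) → ℤ} (hj : IsLukPath n j) :
    IsLukWord n (lukWord j) := by
  obtain ⟨hfirst, hlast, hnonneg, hstep⟩ := hj
  have hsum := sum_take_lukWord hstep
  refine ⟨by simp [lukWord], ?_, fun m hm => ?_⟩
  · have := hsum (Fin.last n)
    rw [hfirst, hlast, Fin.val_last, take_of_length_le (by simp [lukWord])] at this
    omega
  · have h₁ := hsum ⟨m, Nat.lt_succ_of_le hm⟩
    have h₂ := hnonneg ⟨m, Nat.lt_succ_of_le hm⟩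
    rw [hfirst] at h₁
    simp only at h₁
    omega

lemma IsLukWord.isLukPath_lukPathOfWord {l : List ℕ} (hl : IsLukWord n l) :
    IsLukPath n (lukPathOfWord n l) := by
  obtain ⟨hlen, hsum, hprefix⟩ := hl
  refine ⟨by simp [lukPathOfWord], ?_, fun m => ?_, fun m => ?_⟩
  · simp [lukPathOfWord, take_of_length_le hlen.le, hsum]
  · have := hprefix m (Nat.lt_succ_iff.mp m.2)
    simp only [lukPathOfWord]
    omega
  · simp only [lukPathOfWord, Fin.val_succ, Fin.val_castSucc, sum_take_succ l m (by omega),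
      Nat.cast_add, Nat.cast_one]
    omega

def lukPathEquivLukWord (n : ℕ) : {j // IsLukPath n j} ≃ {l // IsLukWord n l} where
  toFun j := ⟨lukWord j.1, j.2.isLukWord_lukWord⟩
  invFun l := ⟨lukPathOfWord n l.1, l.2.isLukPath_lukPathOfWord⟩
  left_inv j := Subtype.ext j.2.lukPathOfWord_lukWord
  right_inv l := Subtype.ext (lukWord_lukPathOfWord l.2.1)

end

/-- The number of Lukasiewicz paths with `n` steps equals the `n`-th Catalan number
`C_n = (2n)!/(n!(n+1)!)`. -/
theorem stmt0 (n : ℕ) :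
    Nat.card {j : Fin (n + 1) → ℤ // IsLukPath n j} =
      (2 * n).factorial / (n.factorial * (n + 1).factorial) := by
  rw [Nat.card_congr (lukPathEquivLukWord n), card_isLukWord, catalan_eq_factorial_div]
end

section
/- The map Ψ : P(n) → Luk(n), which sends a partition π to the Lukasiewicz path with rise-vector (q_1, ..., q_n) where q_m = |V| - 1 if m is the minimum of a block V of π and q_m = -1 otherwise, is well-defined: the vector (q_1, ..., q_n) always satisfies the partial-sum conditions defining a rise-vector of a Lukasiewicz path. -/
/-- `P` is a partition of `{1,...,n}` (modelled on `Fin n`): the blocks are nonempty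
and every element lies in exactly one block. -/
def IsPartition {n : ℕ} (P : Finset (Finset (Fin n))) : Prop :=
  ∅ ∉ P ∧ ∀ a : Fin n, ∃! V, V ∈ P ∧ a ∈ V

/-!
Split the partial sums along the blocks. Within a block `V`, the elements `≤ m` contribute
`|V|` for the minimum (if it is among them) and `-1` each, so `|V| - #{i ∈ V | i ≤ m} ≥ 0`
when the minimum is `≤ m` and `0` otherwise; the whole block contributes `|V| - |V| = 0`.
-/

open Finset

section Block

variable {α : Type*} [LinearOrder α] {V : Finset α}

lemma forall_mem_le_iff_eq_min' (hV : V.Nonempty) {i : α} (hi : i ∈ V) :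
    (∀ x ∈ V, i ≤ x) ↔ i = V.min' hV :=
  ⟨fun h => le_antisymm (V.le_min' hV i h) (V.min'_le i hi),
    fun h x hx => h ▸ V.min'_le x hx⟩

variable [∀ m, Decidable (∀ x ∈ V, m ≤ x)] {q : α → ℤ}

lemma sum_eq_of_subset_block (hV : V.Nonempty)
    (hq : ∀ m ∈ V, q m = if ∀ x ∈ V, m ≤ x then (#V : ℤ) - 1 else -1)
    {S : Finset α} (hS : S ⊆ V) :
    ∑ i ∈ S, q i = (if V.min' hV ∈ S then (#V : ℤ) else 0) - #S := by
  have hqS : ∀ i ∈ S, q i = (if i = V.min' hV then (#V : ℤ) else 0) - 1 := by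
    intro i hi
    rw [hq i (hS hi)]
    simp only [forall_mem_le_iff_eq_min' hV (hS hi)]
    split_ifs <;> ring
  rw [sum_congr rfl hqS, sum_sub_distrib, sum_ite_eq']
  simp

lemma sum_filter_le_block_nonneg (hV : V.Nonempty)
    (hq : ∀ m ∈ V, q m = if ∀ x ∈ V, m ≤ x then (#V : ℤ) - 1 else -1) (t : α) :
    0 ≤ ∑ i ∈ V.filter (· ≤ t), q i := by
  rw [sum_eq_of_subset_block hV hq (filter_subset _ _)]
  split_ifs with hmin
  · have hcard := card_le_card (filter_subset (· ≤ t) V)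
    omega
  · have hempty : V.filter (· ≤ t) = ∅ := by
      refine filter_eq_empty_iff.mpr fun i hi hit => hmin ?_
      exact mem_filter.mpr ⟨V.min'_mem hV, (V.min'_le i hi).trans hit⟩
    simp [hempty]

lemma sum_block_eq_zero (hV : V.Nonempty)
    (hq : ∀ m ∈ V, q m = if ∀ x ∈ V, m ≤ x then (#V : ℤ) - 1 else -1) :
    ∑ i ∈ V, q i = 0 := by
  rw [sum_eq_of_subset_block hV hq subset_rfl, if_pos (V.min'_mem hV), sub_self]

end Block

section Partition

variable {n : ℕ} {P : Finset (Finset (Fin n))}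

lemma IsPartition.nonempty_of_mem (hP : IsPartition P) {V : Finset (Fin n)} (hV : V ∈ P) :
    V.Nonempty :=
  nonempty_iff_ne_empty.mpr fun h => hP.1 (h ▸ hV)

lemma IsPartition.biUnion_eq_univ (hP : IsPartition P) : P.biUnion id = univ :=
  eq_univ_of_forall fun a =>
    let ⟨V, ⟨hV, haV⟩, _⟩ := hP.2 a
    mem_biUnion.mpr ⟨V, hV, haV⟩

lemma IsPartition.pairwiseDisjoint (hP : IsPartition P) :
    (P : Set (Finset (Fin n))).PairwiseDisjoint id :=
  fun _ hV _ hW hVW => disjoint_left.mpr fun a haV haW =>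
    hVW ((hP.2 a).unique ⟨hV, haV⟩ ⟨hW, haW⟩)

lemma IsPartition.sum_filter_eq_sum_blocks {M : Type*} [AddCommMonoid M] (hP : IsPartition P)
    (p : Fin n → Prop) [DecidablePred p] (f : Fin n → M) :
    ∑ i ∈ univ.filter p, f i = ∑ V ∈ P, ∑ i ∈ V.filter p, f i := by
  rw [← hP.biUnion_eq_univ, filter_biUnion, sum_biUnion]
  · rfl
  · exact fun _ hV _ hW hVW => disjoint_filter_filter (hP.pairwiseDisjoint hV hW hVW)

lemma IsPartition.sum_eq_sum_blocks {M : Type*} [AddCommMonoid M] (hP : IsPartition P)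
    (f : Fin n → M) : ∑ i, f i = ∑ V ∈ P, ∑ i ∈ V, f i := by
  rw [← hP.biUnion_eq_univ, sum_biUnion hP.pairwiseDisjoint]
  rfl

end Partition

/-- The map `Ψ : P(n) → Luk(n)` is well-defined: if `q m = |V| - 1` when `m` is the
minimum of its block `V` and `q m = -1` otherwise, then `q` satisfies the partial-sum
conditions defining the rise-vector of a Lukasiewicz path. -/
theorem stmt2 (n : ℕ) (P : Finset (Finset (Fin n))) (hP : IsPartition P)
    (q : Fin n → ℤ)
    (hq : ∀ V ∈ P, ∀ m ∈ V,
      q m = if ∀ x ∈ V, m ≤ x then ((V.card : ℤ) - 1) else -1) :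
    (∀ m : Fin n, 0 ≤ ∑ i ∈ Finset.univ.filter (fun i => i ≤ m), q i) ∧
      ∑ i, q i = 0 := by
  refine ⟨fun m => ?_, ?_⟩
  · rw [hP.sum_filter_eq_sum_blocks]
    exact sum_nonneg fun V hV => sum_filter_le_block_nonneg (hP.nonempty_of_mem hV) (hq V hV) m
  · rw [hP.sum_eq_sum_blocks]
    exact sum_eq_zero fun V hV => sum_block_eq_zero (hP.nonempty_of_mem hV) (hq V hV)
end

section
/- The restriction of the map Ψ : P(n) → Luk(n) to the set NC(n) of non-crossing partitions is a bijection from NC(n) onto Luk(n). -/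
/-- `P` is non-crossing: there are no distinct blocks `V, W` and `a < b < c < d`
with `a, c ∈ V` and `b, d ∈ W`. -/
def IsNC {n : ℕ} (P : Finset (Finset (Fin n))) : Prop :=
  ¬ ∃ V ∈ P, ∃ W ∈ P, V ≠ W ∧ ∃ a b c d : Fin n,
    a < b ∧ b < c ∧ c < d ∧ a ∈ V ∧ c ∈ V ∧ b ∈ W ∧ d ∈ W

/-- The block of `P` containing `m` (the union of the blocks containing `m`;
for a partition this is the unique block containing `m`). -/
def blockOf {n : ℕ} (P : Finset (Finset (Fin n))) (m : Fin n) : Finset (Fin n) :=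
  (P.filter (fun V => m ∈ V)).sup id

/-- The map `Ψ`, sending a partition to the rise-vector with `q m = |V| - 1` when
`m = min V` for a block `V`, and `q m = -1` otherwise. -/
def Psi {n : ℕ} (P : Finset (Finset (Fin n))) : Fin n → ℤ :=
  fun m => if ∀ x ∈ blockOf P m, m ≤ x then ((blockOf P m).card : ℤ) - 1 else -1

open Finset

section Path

variable {n : ℕ}

def partialSum (q : Fin n → ℤ) (k : ℕ) : ℤ :=
  ∑ i ∈ univ.filter (fun i : Fin n => (i : ℕ) < k), q i

lemma partialSum_zero (q : Fin n → ℤ) : partialSum q 0 = 0 := by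
  simp [partialSum]

lemma partialSum_succ (q : Fin n → ℤ) (x : Fin n) :
    partialSum q (x + 1) = partialSum q x + q x := by
  have : univ.filter (fun i : Fin n => (i : ℕ) < x + 1)
      = insert x (univ.filter fun i : Fin n => (i : ℕ) < x) := by
    ext i
    simp only [mem_filter, mem_univ, true_and, mem_insert, Fin.ext_iff]
    omega
  rw [partialSum, partialSum, this, sum_insert (by simp), add_comm]

lemma partialSum_self (q : Fin n → ℤ) : partialSum q n = ∑ i, q i := by
  simp [partialSum]

lemma eq_of_partialSum_eq {q q' : Fin n → ℤ}
    (h : ∀ k ≤ n, partialSum q k = partialSum q' k) : q = q' := by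
  funext i
  have h₀ := h i i.isLt.le
  have h₁ := h (i + 1) i.isLt
  rw [partialSum_succ, partialSum_succ] at h₁
  omega

def IsLukasiewicz (q : Fin n → ℤ) : Prop :=
  (∀ i, -1 ≤ q i) ∧ (∀ k ≤ n, 0 ≤ partialSum q k) ∧ partialSum q n = 0

lemma isLukasiewicz_iff (q : Fin n → ℤ) :
    IsLukasiewicz q ↔ (∀ i, -1 ≤ q i) ∧
      (∀ m : Fin n, 0 ≤ ∑ i ∈ univ.filter (fun i => i ≤ m), q i) ∧ ∑ i, q i = 0 := by
  have hsum (m : Fin n) : ∑ i ∈ univ.filter (fun i => i ≤ m), q i = partialSum q (m + 1) := by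
    simp only [partialSum, Nat.lt_succ_iff, Fin.le_def]
  simp only [IsLukasiewicz, hsum, partialSum_self]
  refine and_congr_right fun _ => and_congr_left fun _ =>
    ⟨fun h m => h _ m.isLt, fun h k hk => ?_⟩
  rcases k with _ | k
  · simp [partialSum_zero]
  · exact h ⟨k, hk⟩

def records (q : Fin n → ℤ) (k : ℕ) : Finset (Fin n) :=
  univ.filter fun x =>
    k ≤ (x : ℕ) ∧ ∀ y : ℕ, k ≤ y → y ≤ x → partialSum q (x + 1) < partialSum q y

/-- The first time after `k` at which the path is at or below `j` is a record reaching `j`,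
since down-steps are `-1`. -/
lemma exists_mem_records_partialSum_eq {q : Fin n → ℤ} (hstep : ∀ i, -1 ≤ q i) {k : ℕ}
    (hk : k ≤ n) {j : ℤ} (hjn : partialSum q n ≤ j) (hjk : j < partialSum q k) :
    ∃ x ∈ records q k, partialSum q (x + 1) = j := by
  have hkn : k < n := lt_of_le_of_ne hk fun h => by subst h; omega
  have hex : ∃ m, k < m ∧ partialSum q m ≤ j := ⟨n, hkn, hjn⟩
  obtain ⟨hk_find, hfind_le⟩ := Nat.find_spec hex
  have hbelow : ∀ y, k ≤ y → y < Nat.find hex → j < partialSum q y := by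
    intro y hky hy
    rcases hky.eq_or_lt with rfl | hky
    · exact hjk
    · have := Nat.find_min hex hy
      omega
  have hle : Nat.find hex ≤ n := Nat.find_min' hex ⟨hkn, hjn⟩
  set x : Fin n := ⟨Nat.find hex - 1, by omega⟩
  have hx : (x : ℕ) + 1 = Nat.find hex := by simp only [x]; omega
  have hjx : partialSum q (x + 1) = j := by
    have := partialSum_succ q x
    have := hbelow x (by simp only [x]; omega) (by omega)
    have := hstep x
    rw [hx] at *
    omega
  refine ⟨x, ?_, hjx⟩
  simp only [records, mem_filter, mem_univ, true_and]
  exact ⟨by simp only [x]; omega, fun y hky hyx => hjx ▸ hbelow y hky (by omega)⟩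

/-- The records are the first passages through the levels `partialSum q k - 1, …,
partialSum q n`. -/
lemma card_records {q : Fin n → ℤ} (hstep : ∀ i, -1 ≤ q i) {k : ℕ} (hk : k ≤ n)
    (hmin : ∀ i, k ≤ i → i ≤ n → partialSum q n ≤ partialSum q i) :
    (#(records q k) : ℤ) = partialSum q k - partialSum q n := by
  rw [← Int.toNat_of_nonneg (sub_nonneg.mpr (hmin k le_rfl hk)), ← Int.card_Ico]
  congr 1
  refine card_nbij (fun x => partialSum q (x + 1)) ?_ ?_ ?_
  · intro x hx
    simp only [records, coe_filter, Set.mem_ofPred_eq, mem_univ, true_and] at hx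
    simp only [coe_Ico, Set.mem_Ico]
    exact ⟨hmin _ (by omega) x.isLt, hx.2 k le_rfl hx.1⟩
  · intro x hx x' hx' hxx'
    simp only [records, coe_filter, Set.mem_ofPred_eq, mem_univ, true_and] at hx hx'
    by_contra hne
    rcases lt_or_gt_of_ne hne with h | h
    · exact (hx'.2 (x + 1) (by omega) h).ne hxx'.symm
    · exact (hx.2 (x' + 1) (by omega) h).ne hxx'
  · intro j hj
    simp only [coe_Ico, Set.mem_Ico] at hj
    obtain ⟨x, hx, hjx⟩ := exists_mem_records_partialSum_eq hstep hk hj.1 hj.2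
    exact ⟨x, by simpa using hx, hjx⟩

end Path

section Pending

variable {n : ℕ}

def pending (f : Fin n → Fin n) (k : ℕ) : Finset (Fin n) :=
  univ.filter fun x => k ≤ (x : ℕ) ∧ (f x : ℕ) < k

variable {f : Fin n → Fin n} (hidem : ∀ x, f (f x) = f x)
  (hnest : ∀ b c : Fin n, f c < b → b < c → f c ≤ f b)
include hidem hnest

lemma pending_subset_pending {x : Fin n} (hlt : f x < x) :
    pending f (f x) ⊆ pending f (x + 1) := by
  intro z hz
  simp only [pending, mem_filter, mem_univ, true_and] at hz ⊢
  obtain ⟨hxz, hzx⟩ := hz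
  refine ⟨?_, by omega⟩
  by_contra! hzx'
  have hzx_ne : z ≠ x := by rintro rfl; omega
  have hxz_ne : f x ≠ z := by rintro rfl; rw [hidem] at hzx; omega
  exact (hnest z x (Fin.lt_def.mpr (by omega)) (Fin.lt_def.mpr (by omega))).not_gt hzx

lemma pending_ssubset_pending {x : Fin n} (hlt : f x < x) {y : ℕ} (hy : (f x : ℕ) < y)
    (hyx : y ≤ x) : pending f (x + 1) ⊂ pending f y := by
  refine ⟨fun z hz => ?_, fun h => ?_⟩
  · simp only [pending, mem_filter, mem_univ, true_and] at hz ⊢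
    refine ⟨by omega, ?_⟩
    by_contra! hyz
    have hzx : f z ≠ x := fun h => hlt.ne (by rw [← h, hidem])
    have := hnest x z (Fin.lt_def.mpr (by omega)) (Fin.lt_def.mpr (by omega))
    omega
  · have := h (mem_filter.mpr ⟨mem_univ x, hyx, hy⟩)
    simp only [pending, mem_filter, mem_univ, true_and] at this
    omega

end Pending

section Opener

variable {n : ℕ} {q : Fin n → ℤ}

def stepFloor (q : Fin n → ℤ) (x : Fin n) : ℤ :=
  min (partialSum q x) (partialSum q (x + 1))

/-- On the path of a non-crossing partition this is the minimum of the block of `x`. -/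
def opener (q : Fin n → ℤ) (x : Fin n) : Fin n :=
  ⟨Nat.findGreatest (fun m => partialSum q m ≤ stepFloor q x) x,
    (Nat.findGreatest_le _).trans_lt x.isLt⟩

lemma opener_le (q : Fin n → ℤ) (x : Fin n) : opener q x ≤ x :=
  Nat.findGreatest_le (P := fun m => partialSum q m ≤ stepFloor q x) x

lemma le_opener {x : Fin n} {m : ℕ} (hm : m ≤ x) (h : partialSum q m ≤ stepFloor q x) :
    m ≤ opener q x :=
  Nat.le_findGreatest hm h

lemma stepFloor_lt_of_opener_lt {x : Fin n} {y : ℕ} (hy : (opener q x : ℕ) < y)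
    (hyx : y ≤ x) : stepFloor q x < partialSum q y :=
  lt_of_not_ge (Nat.findGreatest_is_greatest hy hyx)

variable (hq : IsLukasiewicz q)
include hq

lemma IsLukasiewicz.partialSum_opener_le (x : Fin n) :
    partialSum q (opener q x) ≤ stepFloor q x :=
  Nat.findGreatest_spec (P := fun m => partialSum q m ≤ stepFloor q x) (Nat.zero_le _) <| by
    rw [partialSum_zero]
    exact le_min (hq.2.1 _ x.isLt.le) (hq.2.1 _ x.isLt)

lemma IsLukasiewicz.opener_lt_iff {x : Fin n} {k : ℕ} :
    (opener q x : ℕ) < k ↔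
      ∀ y : ℕ, k ≤ y → y ≤ x → stepFloor q x < partialSum q y := by
  refine ⟨fun h y hky hyx => stepFloor_lt_of_opener_lt (by omega) hyx, fun h => ?_⟩
  by_contra! hk
  exact (h _ hk (opener_le q x)).not_ge (hq.partialSum_opener_le x)

lemma IsLukasiewicz.opener_eq_self_iff {x : Fin n} : opener q x = x ↔ 0 ≤ q x := by
  have hx := partialSum_succ q x
  constructor
  · intro h
    have := hq.partialSum_opener_le x
    rw [h, stepFloor, hx] at this
    omega
  · intro h
    refine le_antisymm (opener_le q x) (le_opener le_rfl ?_)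
    rw [stepFloor, hx]
    omega

lemma IsLukasiewicz.opener_opener (x : Fin n) : opener q (opener q x) = opener q x := by
  rw [hq.opener_eq_self_iff]
  rcases (opener_le q x).lt_or_eq with hlt | heq
  · have h₁ := hq.partialSum_opener_le x
    have h₂ := stepFloor_lt_of_opener_lt (y := opener q x + 1) (lt_add_one _) hlt
    have := partialSum_succ q (opener q x)
    omega
  · rw [heq]
    exact hq.opener_eq_self_iff.1 heq

lemma IsLukasiewicz.opener_le_opener {b c : Fin n} (hb : opener q c < b) (hbc : b < c) :
    opener q c ≤ opener q b := by
  by_contra! h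
  have h₁ := stepFloor_lt_of_opener_lt h hb.le
  have h₂ := hq.partialSum_opener_le c
  have h₃ := stepFloor_lt_of_opener_lt hb hbc.le
  have h₄ := stepFloor_lt_of_opener_lt (y := b + 1) (Nat.lt_succ_of_lt hb) hbc
  simp only [stepFloor] at *
  omega

lemma IsLukasiewicz.pending_opener (k : ℕ) : pending (opener q) k = records q k := by
  ext x
  simp only [pending, records, mem_filter, mem_univ, true_and, hq.opener_lt_iff, stepFloor]
  refine and_congr_right fun hkx => ⟨fun h y hky hyx => ?_, fun h y hky hyx => ?_⟩
  · have := h x hkx le_rfl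
    have := h y hky hyx
    omega
  · have := h y hky hyx
    omega

lemma IsLukasiewicz.card_pending_opener {k : ℕ} (hk : k ≤ n) :
    (#(pending (opener q) k) : ℤ) = partialSum q k := by
  rw [hq.pending_opener, card_records hq.1 hk fun i _ hi => hq.2.2 ▸ hq.2.1 i hi, hq.2.2,
    sub_zero]

end Opener

section Fibers

variable {n : ℕ}

lemma blockOf_eq {P : Finset (Finset (Fin n))} (hP : IsPartition P) {m : Fin n}
    {V : Finset (Fin n)} (hV : V ∈ P) (hm : m ∈ V) : blockOf P m = V := by
  have : P.filter (m ∈ ·) = {V} := by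
    ext W
    simp only [mem_filter, mem_singleton]
    exact ⟨fun hW => (hP.2 m).unique hW ⟨hV, hm⟩, fun h => h ▸ ⟨hV, hm⟩⟩
  rw [blockOf, this, sup_singleton, id]

def fibers {β : Type*} [DecidableEq β] (f : Fin n → β) : Finset (Finset (Fin n)) :=
  univ.image fun x => univ.filter fun y => f y = f x

section

variable {β : Type*} [DecidableEq β] (f : Fin n → β)

lemma isPartition_fibers : IsPartition (fibers f) := by
  refine ⟨fun h => ?_, fun a => ⟨univ.filter fun y => f y = f a,
    ⟨mem_image_of_mem _ (mem_univ a), by simp⟩, ?_⟩⟩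
  · obtain ⟨x, -, hx⟩ := mem_image.mp h
    simpa using hx.subset (mem_filter.mpr ⟨mem_univ x, rfl⟩)
  · rintro V ⟨hV, haV⟩
    obtain ⟨x, -, rfl⟩ := mem_image.mp hV
    simp only [mem_filter, mem_univ, true_and] at haV
    simp only [haV]

lemma blockOf_fibers (m : Fin n) : blockOf (fibers f) m = univ.filter fun y => f y = f m :=
  blockOf_eq (isPartition_fibers f) (mem_image_of_mem _ (mem_univ m)) (by simp)

end

lemma exists_fibers_eq {P : Finset (Finset (Fin n))} (hP : IsPartition P) :
    ∃ f : Fin n → Fin n, (∀ x, f x ≤ x) ∧ (∀ x, f (f x) = f x) ∧ fibers f = P := by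
  have hmem x : blockOf P x ∈ P ∧ x ∈ blockOf P x := by
    obtain ⟨V, ⟨hV, hx⟩, -⟩ := hP.2 x
    exact blockOf_eq hP hV hx ▸ ⟨hV, hx⟩
  have hblock {x y : Fin n} (hy : y ∈ blockOf P x) : blockOf P y = blockOf P x :=
    blockOf_eq hP (hmem x).1 hy
  let f x := (blockOf P x).min' ⟨x, (hmem x).2⟩
  have hf x : f x ∈ blockOf P x := min'_mem _ _
  have hfiber x : (univ.filter fun y => f y = f x) = blockOf P x := by
    ext y
    simp only [mem_filter, mem_univ, true_and]
    refine ⟨fun h => ?_, fun h => by simp only [f, hblock h]⟩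
    have hfy : f y ∈ blockOf P x := by rw [h]; exact hf x
    rw [← hblock hfy, hblock (hf y)]
    exact (hmem y).2
  refine ⟨f, fun x => min'_le _ _ (hmem x).2, fun x => ?_, ?_⟩
  · simp only [f, hblock (hf x)]
  · ext V
    simp only [fibers, mem_image, mem_univ, true_and, hfiber]
    refine ⟨fun ⟨x, hx⟩ => hx ▸ (hmem x).1, fun hV => ?_⟩
    obtain ⟨x, hx⟩ := nonempty_iff_ne_empty.mpr fun h => hP.1 (h ▸ hV)
    exact ⟨x, blockOf_eq hP hV hx⟩

variable {f : Fin n → Fin n} (hle : ∀ x, f x ≤ x) (hidem : ∀ x, f (f x) = f x)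
include hle hidem

lemma Psi_fibers (m : Fin n) : Psi (fibers f) m = #{x | f x = m} - 1 := by
  rw [Psi, blockOf_fibers]
  by_cases hm : f m = m
  · rw [if_pos fun x hx => ?_, hm]
    simp only [mem_filter, mem_univ, true_and] at hx
    exact hm ▸ hx ▸ hle x
  · rw [if_neg fun h => hm (le_antisymm (hle m) (h _ (by simp [hidem]))),
      filter_false_of_mem fun x _ (hx : f x = m) => hm (hx ▸ hidem x)]
    simp

lemma partialSum_Psi_fibers {k : ℕ} (hk : k ≤ n) :
    partialSum (Psi (fibers f)) k = #(pending f k) := by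
  have hfiberwise : #{x : Fin n | (f x : ℕ) < k}
      = ∑ i ∈ univ.filter (fun i : Fin n => (i : ℕ) < k), #{x | f x = i} := by
    rw [card_eq_sum_card_fiberwise (f := f) (t := univ.filter fun i : Fin n => (i : ℕ) < k)
      fun x hx => by simpa using hx]
    refine sum_congr rfl fun i hi => congrArg card ?_
    ext x
    simp only [mem_filter, mem_univ, true_and] at hi ⊢
    exact ⟨fun h => h.2, fun h => ⟨h ▸ hi, h⟩⟩
  have hsplit : #{x : Fin n | (f x : ℕ) < k} = #{x : Fin n | (x : ℕ) < k} + #(pending f k) := by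
    rw [← card_filter_add_card_filter_not (fun x : Fin n => (x : ℕ) < k), filter_filter,
      filter_filter]
    congr 2 <;> ext x <;> simp only [pending, mem_filter, mem_univ, true_and, not_lt]
    · exact ⟨fun h => h.2, fun h => ⟨(Fin.le_def.mp (hle x)).trans_lt h, h⟩⟩
    · exact and_comm
  simp only [partialSum, Psi_fibers hle hidem, sum_sub_distrib, sum_const]
  rw [← Nat.cast_sum, ← hfiberwise, hsplit, Fin.card_filter_val_lt, min_eq_right hk]
  push_cast
  ring

lemma isLukasiewicz_Psi_fibers : IsLukasiewicz (Psi (fibers f)) := by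
  refine ⟨fun i => ?_, fun k hk => ?_, ?_⟩
  · rw [Psi_fibers hle hidem]
    omega
  · rw [partialSum_Psi_fibers hle hidem hk]
    positivity
  · rw [partialSum_Psi_fibers hle hidem le_rfl, pending, filter_false_of_mem fun x _ h => by omega]
    rfl

lemma isNC_fibers_iff :
    IsNC (fibers f) ↔ ∀ b c : Fin n, f c < b → b < c → f c ≤ f b := by
  constructor
  · intro hNC b c hcb hbc
    by_contra! hbc'
    refine hNC ⟨_, mem_image_of_mem _ (mem_univ b), _, mem_image_of_mem _ (mem_univ c), ?_,
      f b, f c, b, c, hbc', hcb, hbc, ?_⟩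
    · intro h
      have : b ∈ univ.filter fun y => f y = f c := h ▸ by simp
      simp only [mem_filter, mem_univ, true_and] at this
      exact hbc'.ne this
    · simp [hidem]
  · rintro hnest ⟨V, hV, W, hW, hVW, a, b, c, d, hab, hbc, hcd, haV, hcV, hbW, hdW⟩
    obtain ⟨v, -, rfl⟩ := mem_image.mp hV
    obtain ⟨w, -, rfl⟩ := mem_image.mp hW
    simp only [mem_filter, mem_univ, true_and] at haV hcV hbW hdW
    have hfc : f c ≤ a := hcV ▸ haV ▸ hle a
    have hfd : f d ≤ b := hdW ▸ hbW ▸ hle b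
    have h₁ := hnest b c (hfc.trans_lt hab) hbc
    have h₂ := hnest c d (hfd.trans_lt hbc) hcd
    apply hVW
    rw [← hcV, ← hbW, le_antisymm h₁ (by rw [hbW, ← hdW]; exact h₂)]

lemma opener_Psi_fibers (hnest : ∀ b c : Fin n, f c < b → b < c → f c ≤ f b) :
    opener (Psi (fibers f)) = f := by
  set q := Psi (fibers f) with hq_def
  have hq : IsLukasiewicz q := isLukasiewicz_Psi_fibers hle hidem
  have hS {k : ℕ} (hk : k ≤ n) : partialSum q k = #(pending f k) :=
    partialSum_Psi_fibers hle hidem hk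
  funext x
  rcases (hle x).lt_or_eq with hlt | heq
  · have hqx : q x = -1 := by
      rw [hq_def, Psi_fibers hle hidem, card_eq_zero.mpr (filter_false_of_mem
        fun y _ (hy : f y = x) => hlt.ne (by rw [← hy, hidem]))]
      rfl
    have hfloor : stepFloor q x = partialSum q (x + 1) := by
      have := partialSum_succ q x
      rw [stepFloor, min_eq_right (by omega)]
    refine le_antisymm ?_ (le_opener (hle x) ?_)
    · by_contra! h
      have := Nat.cast_lt (α := ℤ).mpr <|
        card_lt_card (pending_ssubset_pending hidem hnest hlt h (opener_le q x))
      rw [← hS x.isLt, ← hS (by omega), ← hfloor] at this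
      exact this.not_ge (hq.partialSum_opener_le x)
    · rw [hfloor, hS (f x).isLt.le, hS x.isLt]
      exact Nat.cast_le.mpr (card_le_card (pending_subset_pending hidem hnest hlt))
  · rw [heq, hq.opener_eq_self_iff, hq_def, Psi_fibers hle hidem]
    have : 0 < #{y | f y = x} := card_pos.mpr ⟨x, by simp [heq]⟩
    omega

end Fibers

lemma IsLukasiewicz.Psi_fibers_opener {n : ℕ} {q : Fin n → ℤ} (hq : IsLukasiewicz q) :
    Psi (fibers (opener q)) = q :=
  eq_of_partialSum_eq fun k hk => by
    rw [partialSum_Psi_fibers (opener_le q) hq.opener_opener hk, hq.card_pending_opener hk]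

/-- The restriction of `Ψ` to the non-crossing partitions is a bijection onto the
set `Luk(n)` of Lukasiewicz paths (identified with their rise-vectors). -/
theorem stmt3 (n : ℕ) :
    Set.BijOn (Psi (n := n)) {P | IsPartition P ∧ IsNC P}
      {q : Fin n → ℤ | (∀ i, -1 ≤ q i) ∧
        (∀ m : Fin n, 0 ≤ ∑ i ∈ Finset.univ.filter (fun i => i ≤ m), q i) ∧
        ∑ i, q i = 0} := by
  simp only [← isLukasiewicz_iff]
  refine ⟨?_, ?_, fun q hq => ?_⟩
  · rintro P ⟨hP, -⟩
    obtain ⟨f, hle, hidem, rfl⟩ := exists_fibers_eq hP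
    exact isLukasiewicz_Psi_fibers hle hidem
  · rintro P ⟨hP, hNC⟩ P' ⟨hP', hNC'⟩ h
    obtain ⟨f, hle, hidem, rfl⟩ := exists_fibers_eq hP
    obtain ⟨f', hle', hidem', rfl⟩ := exists_fibers_eq hP'
    rw [← opener_Psi_fibers hle hidem ((isNC_fibers_iff hle hidem).1 hNC), h,
      opener_Psi_fibers hle' hidem' ((isNC_fibers_iff hle' hidem').1 hNC')]
  · exact ⟨fibers (opener q), ⟨isPartition_fibers _,
      (isNC_fibers_iff (opener_le q) hq.opener_opener).2 fun _ _ => hq.opener_le_opener⟩,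
      hq.Psi_fibers_opener⟩
end

section
/- For every χ ∈ {ℓ,r}^n, with χ_opp = (h_n, ..., h_1) denoting the reversed tuple, one has P^(χ_opp)(n) = {π_opp : π ∈ P^(χ)(n)}, where π_opp is the image of π under the order-reversing permutation m ↦ n+1-m. -/
open scoped Classical

/-- The permutation `σ_χ` associated with `χ ∈ {ℓ,r}^n` (with `ℓ = true`,
`r = false`): it lists the `ℓ`-positions of `χ` in increasing order, followed by the
`r`-positions in decreasing order. -/
def sigmaChi {n : ℕ} (χ : Fin n → Bool) : Fin n → Fin n :=
  fun i => (((List.finRange n).filter χ) ++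
    (((List.finRange n).filter (fun j => !(χ j))).reverse)).getD i i

/-- The set of partitions `P^(χ)(n) = {σ_χ·π : π ∈ NC(n)}`. -/
noncomputable def PchiF (n : ℕ) (χ : Fin n → Bool) :
    Finset (Finset (Finset (Fin n))) :=
  (Finset.univ.filter (fun P => IsPartition P ∧ IsNC P)).image
    (fun P => P.image (Finset.image (sigmaChi χ)))

variable {n : ℕ}

/-- The list defining `sigmaChi`. -/
def sigList (χ : Fin n → Bool) : List (Fin n) :=
  ((List.finRange n).filter χ) ++ (((List.finRange n).filter (fun j => !(χ j))).reverse)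

abbrev uChi (χ : Fin n → Bool) : ℕ := ((List.finRange n).filter χ).length

lemma uChi_le (χ : Fin n → Bool) : uChi χ ≤ n := by
  have := List.length_filter_le χ (List.finRange n)
  simpa using this

lemma sigList_perm (χ : Fin n → Bool) : (sigList χ).Perm (List.finRange n) := by
  have h := List.filter_append_perm χ (List.finRange n)
  refine List.Perm.trans ?_ h
  exact List.Perm.append_left _ (List.reverse_perm _)

lemma sigList_length (χ : Fin n → Bool) : (sigList χ).length = n := by
  simpa using (sigList_perm χ).length_eq

lemma lr_length (χ : Fin n → Bool) :
    ((List.finRange n).filter (fun j => !(χ j))).length = n - uChi χ := by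
  have h := sigList_length χ
  unfold sigList at h
  simp only [List.length_append, List.length_reverse] at h
  unfold uChi
  omega

lemma sigList_nodup (χ : Fin n → Bool) : (sigList χ).Nodup :=
  (sigList_perm χ).nodup_iff.mpr (List.nodup_finRange n)

lemma sigmaChi_eq (χ : Fin n → Bool) (i : Fin n) :
    sigmaChi χ i = (sigList χ)[(i : ℕ)]'(by rw [sigList_length]; exact i.isLt) := by
  unfold sigmaChi
  exact List.getD_eq_getElem _ _ _

lemma sigmaChi_injective (χ : Fin n → Bool) : Function.Injective (sigmaChi χ) := by
  intro i j h
  rw [sigmaChi_eq, sigmaChi_eq] at h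
  have := (List.Nodup.getElem_inj_iff (sigList_nodup χ)).mp h
  exact Fin.ext this

/-- The permutation `τ_u` reversing each of the blocks `[0,u)` and `[u,n)`. -/
def tauChi (χ : Fin n → Bool) : Fin n → Fin n := fun i =>
  if h : (i : ℕ) < uChi χ then
    ⟨uChi χ - 1 - (i : ℕ), by have := uChi_le χ; omega⟩
  else ⟨n + uChi χ - 1 - (i : ℕ), by have := i.isLt; omega⟩

lemma tauChi_val (χ : Fin n → Bool) (i : Fin n) :
    (tauChi χ i : ℕ) =
      if (i : ℕ) < uChi χ then uChi χ - 1 - (i : ℕ) else n + uChi χ - 1 - (i : ℕ) := by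
  unfold tauChi
  split_ifs <;> rfl

lemma tauChi_invol (χ : Fin n → Bool) : Function.Involutive (tauChi χ) := by
  intro i
  have hu := uChi_le χ
  have hi := i.isLt
  apply Fin.ext
  simp only [tauChi_val]
  split_ifs <;> omega

lemma tauChi_lt_same (χ : Fin n → Bool) {i j : Fin n} (hij : i < j)
    (h : (j : ℕ) < uChi χ ∨ uChi χ ≤ (i : ℕ)) : tauChi χ j < tauChi χ i := by
  have hi := i.isLt
  have hj := j.isLt
  rw [Fin.lt_def] at hij ⊢
  rw [tauChi_val, tauChi_val]
  split_ifs <;> omega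

lemma tauChi_lt_diff (χ : Fin n → Bool) {i j : Fin n} ( hi : (i : ℕ) < uChi χ)
    (hj : uChi χ ≤ (j : ℕ)) : tauChi χ i < tauChi χ j := by
  have hj' := j.isLt
  rw [Fin.lt_def]
  rw [tauChi_val, tauChi_val]
  split_ifs <;> omega

lemma map_rev_finRange : (List.finRange n).map Fin.rev = (List.finRange n).reverse := by
  apply List.ext_getElem (by simp)
  intro i h1 h2
  simp only [List.getElem_map, List.getElem_reverse, List.getElem_finRange]
  ext
  simp [Fin.val_rev]
  omega

lemma finRange_eq : List.finRange n = ((List.finRange n).reverse).map Fin.rev := by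
  conv_rhs => rw [List.map_reverse, map_rev_finRange, List.reverse_reverse]

lemma sigList_opp (χ : Fin n → Bool) :
    sigList (fun i : Fin n => χ i.rev) =
      ((((List.finRange n).filter χ).reverse) ++
        ((List.finRange n).filter (fun j => !(χ j)))).map Fin.rev := by
  unfold sigList
  conv_lhs => rw [finRange_eq]
  rw [List.filter_map, List.filter_map]
  have h1 : List.filter ((fun i : Fin n => χ i.rev) ∘ Fin.rev) (List.finRange n).reverse
      = List.filter χ (List.finRange n).reverse := by
    apply List.filter_congr
    intro x _
    simp [Function.comp, Fin.rev_rev]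
  have h2 : List.filter ((fun j : Fin n => !(χ j.rev)) ∘ Fin.rev) (List.finRange n).reverse
      = List.filter (fun j => !(χ j)) (List.finRange n).reverse := by
    apply List.filter_congr
    intro x _
    simp [Function.comp, Fin.rev_rev]
  rw [h1, h2, List.filter_reverse, List.filter_reverse]
  simp [List.map_reverse, List.reverse_reverse, List.map_append]

lemma sigmaChi_opp (χ : Fin n → Bool) (i : Fin n) :
    sigmaChi (fun j : Fin n => χ j.rev) i = Fin.rev (sigmaChi χ (tauChi χ i)) := by
  have hu := uChi_le χ
  have hi := i.isLt
  have hlr := lr_length χ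
  have hτ := tauChi_val χ i
  rw [sigmaChi_eq, sigmaChi_eq]
  have h1 : sigList (fun j : Fin n => χ j.rev) =
      ((((List.finRange n).filter χ).reverse) ++
        ((List.finRange n).filter (fun j => !(χ j)))).map Fin.rev := sigList_opp χ
  -- lengths
  have hlen : ((((List.finRange n).filter χ).reverse) ++
      ((List.finRange n).filter (fun j => !(χ j)))).length = n := by
    simp only [List.length_append, List.length_reverse]
    unfold uChi at hu hlr
    omega
  rw [List.getElem_of_eq h1, List.getElem_map]
  congr 1
  unfold sigList
  rw [List.getElem_append, List.getElem_append]
  by_cases hc : (i : ℕ) < uChi χ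
  · have hτv : (tauChi χ i : ℕ) = uChi χ - 1 - (i : ℕ) := by rw [hτ]; simp [hc]
    unfold uChi at hτv hc hu hlr
    rw [dif_pos (by simp only [List.length_reverse]; omega), dif_pos (by omega)]
    rw [List.getElem_reverse]
    congr 1
    omega
  · have hτv : (tauChi χ i : ℕ) = n + uChi χ - 1 - (i : ℕ) := by rw [hτ]; simp [hc]
    unfold uChi at hτv hc hu hlr
    rw [dif_neg (by simp only [List.length_reverse]; omega), dif_neg (by omega)]
    rw [List.getElem_reverse]
    congr 1
    simp only [List.length_reverse]
    omega

lemma isPartition_image {g : Fin n → Fin n} (hg : Function.Bijective g)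
    {P : Finset (Finset (Fin n))} (hP : IsPartition P) :
    IsPartition (P.image (Finset.image g)) := by
  constructor
  · intro h
    obtain ⟨V, hV, hVe⟩ := Finset.mem_image.mp h
    have hVemp : V = ∅ := Finset.image_eq_empty.mp hVe
    exact hP.1 (hVemp ▸ hV)
  · intro a
    obtain ⟨b, rfl⟩ := hg.surjective a
    obtain ⟨V, ⟨hVP, hbV⟩, huniq⟩ := hP.2 b
    refine ⟨V.image g, ⟨Finset.mem_image_of_mem _ hVP, Finset.mem_image_of_mem _ hbV⟩, ?_⟩
    rintro W' ⟨hW', haW'⟩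
    obtain ⟨W, hWP, rfl⟩ := Finset.mem_image.mp hW'
    obtain ⟨w, hwW, hw⟩ := Finset.mem_image.mp haW'
    have hwb : w = b := hg.injective hw
    rw [huniq W ⟨hWP, hwb ▸ hwW⟩]

lemma mem_image_invol {g : Fin n → Fin n} (hg : Function.Involutive g)
    {V : Finset (Fin n)} {a : Fin n} : a ∈ V.image g ↔ g a ∈ V := by
  constructor
  · intro h
    obtain ⟨x, hx, rfl⟩ := Finset.mem_image.mp h
    rwa [hg x]
  · intro h
    exact Finset.mem_image.mpr ⟨g a, h, hg a⟩

lemma isNC_image_tau (χ : Fin n → Bool) {P : Finset (Finset (Fin n))} (hP : IsNC P) :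
    IsNC (P.image (Finset.image (tauChi χ))) := by
  rintro ⟨V', hV', W', hW', hne, a, b, c, d, hab, hbc, hcd, haV, hcV, hbW, hdW⟩
  obtain ⟨V, hVP, rfl⟩ := Finset.mem_image.mp hV'
  obtain ⟨W, hWP, rfl⟩ := Finset.mem_image.mp hW'
  have hVW : V ≠ W := fun h => hne (by rw [h])
  have hA : tauChi χ a ∈ V := (mem_image_invol (tauChi_invol χ)).mp haV
  have hC : tauChi χ c ∈ V := (mem_image_invol (tauChi_invol χ)).mp hcV
  have hB : tauChi χ b ∈ W := (mem_image_invol (tauChi_invol χ)).mp hbW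
  have hD : tauChi χ d ∈ W := (mem_image_invol (tauChi_invol χ)).mp hdW
  have hab' := Fin.lt_def.mp hab
  have hbc' := Fin.lt_def.mp hbc
  have hcd' := Fin.lt_def.mp hcd
  apply hP
  by_cases h1 : (a : ℕ) < uChi χ
  · by_cases h2 : (b : ℕ) < uChi χ
    · by_cases h3 : (c : ℕ) < uChi χ
      · by_cases h4 : (d : ℕ) < uChi χ
        · -- all in the first block
          exact ⟨W, hWP, V, hVP, hVW.symm, tauChi χ d, tauChi χ c, tauChi χ b, tauChi χ a,
            tauChi_lt_same χ hcd (Or.inl h4), tauChi_lt_same χ hbc (Or.inl h3),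
            tauChi_lt_same χ hab (Or.inl h2), hD, hB, hC, hA⟩
        · -- a,b,c in the first block, d in the second
          exact ⟨V, hVP, W, hWP, hVW, tauChi χ c, tauChi χ b, tauChi χ a, tauChi χ d,
            tauChi_lt_same χ hbc (Or.inl h3), tauChi_lt_same χ hab (Or.inl h2),
            tauChi_lt_diff χ h1 (Nat.le_of_not_lt h4), hC, hA, hB, hD⟩
      · -- a,b in the first block, c,d in the second
        have h3' : uChi χ ≤ (c : ℕ) := Nat.le_of_not_lt h3
        have h4' : uChi χ ≤ (d : ℕ) := by omega
        exact ⟨W, hWP, V, hVP, hVW.symm, tauChi χ b, tauChi χ a, tauChi χ d, tauChi χ c,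
          tauChi_lt_same χ hab (Or.inl h2), tauChi_lt_diff χ h1 h4',
          tauChi_lt_same χ hcd (Or.inr h3'), hB, hD, hA, hC⟩
    · -- a in the first block, b,c,d in the second
      have h2' : uChi χ ≤ (b : ℕ) := Nat.le_of_not_lt h2
      have h3' : uChi χ ≤ (c : ℕ) := by omega
      have h4' : uChi χ ≤ (d : ℕ) := by omega
      exact ⟨V, hVP, W, hWP, hVW, tauChi χ a, tauChi χ d, tauChi χ c, tauChi χ b,
        tauChi_lt_diff χ h1 h4', tauChi_lt_same χ hcd (Or.inr h3'),
        tauChi_lt_same χ hbc (Or.inr h2'), hA, hC, hD, hB⟩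
  · -- all in the second block
    have h1' : uChi χ ≤ (a : ℕ) := Nat.le_of_not_lt h1
    have h2' : uChi χ ≤ (b : ℕ) := by omega
    have h3' : uChi χ ≤ (c : ℕ) := by omega
    exact ⟨W, hWP, V, hVP, hVW.symm, tauChi χ d, tauChi χ c, tauChi χ b, tauChi χ a,
      tauChi_lt_same χ hcd (Or.inr h3'), tauChi_lt_same χ hbc (Or.inr h2'),
      tauChi_lt_same χ hab (Or.inr h1'), hD, hB, hC, hA⟩

/-- For every `χ ∈ {ℓ,r}^n`, with `χ_opp` the reversed tuple, one has
`P^(χ_opp)(n) = {π_opp : π ∈ P^(χ)(n)}`, where `π_opp` is the blockwise image of `π`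
under the order-reversing permutation. -/
theorem stmt14 (n : ℕ) (χ : Fin n → Bool) :
    PchiF n (fun i => χ i.rev) =
      (PchiF n χ).image
        (fun P => P.image (Finset.image (Fin.rev : Fin n → Fin n))) := by
  classical
  have hσ : sigmaChi (fun i : Fin n => χ i.rev)
      = fun i => Fin.rev (sigmaChi χ (tauChi χ i)) := funext (sigmaChi_opp χ)
  have hτbij : Function.Bijective (tauChi χ) := (tauChi_invol χ).bijective
  unfold PchiF
  rw [hσ]
  set S := Finset.univ.filter
    (fun P : Finset (Finset (Fin n)) => IsPartition P ∧ IsNC P) with hSdef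
  have hmemS : ∀ P : Finset (Finset (Fin n)), P ∈ S ↔ IsPartition P ∧ IsNC P := by
    intro P; simp [hSdef]
  have hid : ∀ V : Finset (Fin n), (V.image (tauChi χ)).image (tauChi χ) = V := by
    intro V
    rw [Finset.image_image]
    have h : (tauChi χ) ∘ (tauChi χ) = id := funext (tauChi_invol χ)
    rw [h, Finset.image_id]
  have hSinv : S.image (fun P => P.image (Finset.image (tauChi χ))) = S := by
    apply Finset.Subset.antisymm
    · intro Q hQ
      obtain ⟨P, hP, rfl⟩ := Finset.mem_image.mp hQ
      rw [hmemS] at hP ⊢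
      exact ⟨isPartition_image hτbij hP.1, isNC_image_tau χ hP.2⟩
    · intro P hP
      refine Finset.mem_image.mpr ⟨P.image (Finset.image (tauChi χ)), ?_, ?_⟩
      · rw [hmemS] at hP ⊢
        exact ⟨isPartition_image hτbij hP.1, isNC_image_tau χ hP.2⟩
      · rw [Finset.image_image]
        have h : (Finset.image (tauChi χ)) ∘ (Finset.image (tauChi χ)) = id := by
          funext V; exact hid V
        rw [h, Finset.image_id]
  have key : ∀ P : Finset (Finset (Fin n)),
      P.image (Finset.image (fun i => Fin.rev (sigmaChi χ (tauChi χ i)))) =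
        (((P.image (Finset.image (tauChi χ))).image
          (Finset.image (sigmaChi χ))).image (Finset.image (Fin.rev : Fin n → Fin n))) := by
    intro P
    rw [Finset.image_image, Finset.image_image]
    apply Finset.image_congr
    intro V _
    simp only [Function.comp]
    rw [Finset.image_image, Finset.image_image]
    rfl
  calc S.image (fun P => P.image (Finset.image (fun i => Fin.rev (sigmaChi χ (tauChi χ i)))))
      = S.image ((fun P : Finset (Finset (Fin n)) =>
            P.image (Finset.image (Fin.rev : Fin n → Fin n))) ∘
          ((fun P => P.image (Finset.image (sigmaChi χ))) ∘
            (fun P => P.image (Finset.image (tauChi χ))))) := by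
        apply Finset.image_congr
        intro P _
        exact key P
    _ = ((S.image (fun P => P.image (Finset.image (tauChi χ)))).image
          (fun P => P.image (Finset.image (sigmaChi χ)))).image
          (fun P => P.image (Finset.image (Fin.rev : Fin n → Fin n))) := by
        rw [Finset.image_image, Finset.image_image]
        rfl
    _ = (S.image (fun P => P.image (Finset.image (sigmaChi χ)))).image
          (fun P => P.image (Finset.image (Fin.rev : Fin n → Fin n))) := by
        rw [hSinv]
end

section
/- Let u be the number of occurrences of ℓ in χ ∈ {ℓ,r}^n and let χ_opp be the reversal of χ. Then σ_{χ_opp} = τ_o ∘ σ_χ ∘ τ_u, where τ_o(m) = n+1-m, and τ_u(m) = u+1-m for 1 ≤ m ≤ u and τ_u(m) = n+u+1-m for u < m ≤ n. -/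
open scoped Classical

/-- With `u` the number of occurrences of `ℓ` in `χ` and `χ_opp` the reversal of
`χ`, one has `σ_{χ_opp} = τ_o ∘ σ_χ ∘ τ_u`, where `τ_o` is the order-reversing
permutation and `τ_u` is given (0-indexed) by `τ_u(m) = u - 1 - m` for `m < u` and
`τ_u(m) = n + u - 1 - m` for `u ≤ m < n`. -/
theorem stmt15 (n : ℕ) (χ : Fin n → Bool) (u : ℕ)
    (hu : u = (Finset.univ.filter (fun i => χ i = true)).card)
    (τu : Fin n → Fin n)
    (hτu : ∀ m : Fin n, (τu m : ℕ) =
      if (m : ℕ) < u then u - 1 - (m : ℕ) else n + u - 1 - (m : ℕ)) :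
    sigmaChi (fun i => χ i.rev) = Fin.rev ∘ sigmaChi χ ∘ τu := by
  classical
  set Lℓ := (List.finRange n).filter χ with hLℓ
  set Lr := (List.finRange n).filter (fun j => !(χ j)) with hLr
  have hlenℓ : Lℓ.length = u := by
    rw [hu, hLℓ]
    simp [Finset.filter, Finset.card, Fin.univ_def, List.countP_eq_length_filter]
  have hlensum : Lℓ.length + Lr.length = n := by
    rw [hLℓ, hLr]
    have := List.length_eq_length_filter_add (l := List.finRange n) χ
    simp only [List.length_finRange] at this
    omega
  have hlenr : Lr.length = n - u := by omega
  have hun : u ≤ n := by omega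
  -- identify the filtered lists for the reversed χ
  have hfin : List.finRange n = ((List.finRange n).map Fin.rev).reverse := by
    rw [← List.finRange_reverse, List.reverse_reverse]
  have keyℓ : (List.finRange n).filter (fun i => χ i.rev) =
      (Lℓ.map Fin.rev).reverse := by
    conv_lhs => rw [hfin]
    rw [List.filter_reverse, List.filter_map]
    simp [Function.comp_def, Fin.rev_rev, hLℓ]
  have keyr : (List.finRange n).filter (fun i => !(χ i.rev)) =
      (Lr.map Fin.rev).reverse := by
    conv_lhs => rw [hfin]
    rw [List.filter_reverse, List.filter_map]
    simp [Function.comp_def, Fin.rev_rev, hLr]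
  funext i
  simp only [sigmaChi, Function.comp_apply, keyℓ, keyr, List.reverse_reverse]
  have hLlen : (Lℓ ++ Lr.reverse).length = n := by simp; omega
  have hL'len : ((Lℓ.map Fin.rev).reverse ++ Lr.map Fin.rev).length = n := by simp; omega
  have hi : (i : ℕ) < n := i.isLt
  have hτ := hτu i
  have hτlt : (τu i : ℕ) < n := (τu i).isLt
  rw [List.getD_eq_getElem _ _ (by omega : (i:ℕ) < ((Lℓ.map Fin.rev).reverse ++ Lr.map Fin.rev).length),
      List.getD_eq_getElem _ _ (by omega : ((τu i):ℕ) < (Lℓ ++ Lr.reverse).length)]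
  by_cases hcase : (i : ℕ) < u
  · rw [if_pos hcase] at hτ
    have h1 : (i : ℕ) < ((Lℓ.map Fin.rev).reverse).length := by simp; omega
    rw [List.getElem_append_left h1, List.getElem_reverse, List.getElem_map]
    have h2 : ((τu i) : ℕ) < Lℓ.length := by omega
    rw [List.getElem_append_left h2]
    have h3 : Lℓ.length - 1 - (i:ℕ) = ((τu i):ℕ) := by omega
    simp only [List.length_map, h3]
  · rw [if_neg hcase] at hτ
    have h1 : ((Lℓ.map Fin.rev).reverse).length ≤ (i : ℕ) := by simp; omega
    rw [List.getElem_append_right h1, List.getElem_map]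
    have h2 : Lℓ.length ≤ ((τu i) : ℕ) := by omega
    rw [List.getElem_append_right h2, List.getElem_reverse]
    have h3 : Lr.length - 1 - (((τu i):ℕ) - Lℓ.length) =
        (i:ℕ) - ((Lℓ.map Fin.rev).reverse).length := by simp; omega
    simp only [h3]
end

section
/- In any noncommutative probability space, for a_1, a_2, a_3, a_4 one has κ_{(ℓ,r,ℓ,r)}(a_1,a_2,a_3,a_4) = κ_4(a_1,a_2,a_3,a_4) + κ_2(a_1,a_4)κ_2(a_2,a_3) − κ_2(a_1,a_3)κ_2(a_2,a_4), where κ_2 and κ_4 are free cumulants. -/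
open scoped Classical

/-- Restriction of an `n`-tuple to a subset `V` of indices, listed in increasing
order. -/
noncomputable def restr {n : ℕ} {α : Type*} (x : Fin n → α) (V : Finset (Fin n)) :
    Fin V.card → α :=
  fun i => x (V.orderIsoOfFin rfl i).1

/-- The moment ↔ `(ℓ,r)`-cumulant formula: for all `n ≥ 1`, `χ ∈ {ℓ,r}^n` and
`a_1, ..., a_n ∈ A`, `φ(a_1 ⋯ a_n) = Σ_{π ∈ P^(χ)(n)} Π_{V ∈ π}
κ_{χ|V}((a_1,...,a_n)|V)`. -/
def momentFormula {A : Type*} [Ring A] [Algebra ℂ A] (φ : A →ₗ[ℂ] ℂ)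
    (κ : (m : ℕ) → (Fin m → Bool) → MultilinearMap ℂ (fun _ : Fin m => A) ℂ) :
    Prop :=
  ∀ (n : ℕ), 1 ≤ n → ∀ (χ : Fin n → Bool) (a : Fin n → A),
    φ ((List.ofFn a).prod) =
      ∑ π ∈ PchiF n χ, ∏ V ∈ π, κ V.card (restr χ V) (restr a V)


/-- The moment ↔ free cumulant formula: `φ(a_1 ⋯ a_n) = Σ_{π ∈ NC(n)} Π_{V ∈ π}
κ_{|V|}((a_1,...,a_n)|V)`. -/
def freeFormula {A : Type*} [Ring A] [Algebra ℂ A] (φ : A →ₗ[ℂ] ℂ)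
    (κ : (m : ℕ) → MultilinearMap ℂ (fun _ : Fin m => A) ℂ) : Prop :=
  ∀ (n : ℕ), 1 ≤ n → ∀ a : Fin n → A,
    φ ((List.ofFn a).prod) =
      ∑ π ∈ Finset.univ.filter
        (fun P : Finset (Finset (Fin n)) => IsPartition P ∧ IsNC P),
        ∏ V ∈ π, κ V.card (restr a V)

/-!
The permutation `σ_χ` acts on set partitions by relabelling, so `P^(χ)(n)` is the image of
`NC(n)` under a bijection of the set of all partitions of `n` points. For `n ≤ 3` every partition
is non-crossing, hence `P^(χ)(n) = NC(n)`, and by induction on `n` the two moment-cumulant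
formulas force `κ_χ = κ_n`. For `n = 4` the only crossing partition is `{{1,3},{2,4}}`, which
`σ_(ℓ,r,ℓ,r)` sends to `{{1,4},{2,3}}`: each formula sums over all partitions but one. All terms
other than the one-block partition involve cumulants of order `≤ 3` and therefore agree, so
subtracting the two formulas leaves exactly the claimed identity.
-/

noncomputable def partitions (n : ℕ) : Finset (Finset (Finset (Fin n))) :=
  Finset.univ.filter IsPartition

noncomputable def ncPartitions (n : ℕ) : Finset (Finset (Finset (Fin n))) :=
  Finset.univ.filter (fun P : Finset (Finset (Fin n)) => IsPartition P ∧ IsNC P)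

def relabel {n : ℕ} (σ : Fin n → Fin n) (P : Finset (Finset (Fin n))) :
    Finset (Finset (Fin n)) :=
  P.image (Finset.image σ)

-- `{{1,3},{2,4}}` and `{{1,4},{2,3}}` in the paper's 1-based indexing.
def crossingPairing : Finset (Finset (Fin 4)) := {{0, 2}, {1, 3}}

def nestedPairing : Finset (Finset (Fin 4)) := {{0, 3}, {1, 2}}

section Partitions

variable {n : ℕ}

theorem IsPartition.nonempty {P : Finset (Finset (Fin n))} (hP : IsPartition P)
    {V : Finset (Fin n)} (hV : V ∈ P) : V.Nonempty :=
  Finset.nonempty_iff_ne_empty.mpr fun h => hP.1 (h ▸ hV)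

theorem IsPartition.eq_of_mem {P : Finset (Finset (Fin n))} (hP : IsPartition P)
    {V W : Finset (Fin n)} (hV : V ∈ P) (hW : W ∈ P) {a : Fin n} (haV : a ∈ V)
    (haW : a ∈ W) : V = W :=
  (hP.2 a).unique ⟨hV, haV⟩ ⟨hW, haW⟩

theorem IsPartition.disjoint_of_ne {P : Finset (Finset (Fin n))} (hP : IsPartition P)
    {V W : Finset (Fin n)} (hV : V ∈ P) (hW : W ∈ P) (hne : V ≠ W) : Disjoint V W :=
  Finset.disjoint_left.mpr fun _ haV haW => hne (hP.eq_of_mem hV hW haV haW)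

theorem IsPartition.eq_pair_of_union_eq_univ {P : Finset (Finset (Fin n))} (hP : IsPartition P)
    {V W : Finset (Fin n)} (hV : V ∈ P) (hW : W ∈ P) (hcover : V ∪ W = Finset.univ) :
    P = {V, W} := by
  ext U
  simp only [Finset.mem_insert, Finset.mem_singleton]
  refine ⟨fun hU => ?_, by rintro (rfl | rfl) <;> assumption⟩
  obtain ⟨x, hx⟩ := hP.nonempty hU
  rcases Finset.mem_union.mp (hcover ▸ Finset.mem_univ x) with hxV | hxW
  exacts [Or.inl (hP.eq_of_mem hU hV hx hxV), Or.inr (hP.eq_of_mem hU hW hx hxW)]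

theorem IsPartition.eq_singleton_univ {P : Finset (Finset (Fin n))} (hP : IsPartition P)
    (huniv : Finset.univ ∈ P) : P = {Finset.univ} := by
  ext V
  refine ⟨fun hV => ?_, fun hV => Finset.mem_singleton.mp hV ▸ huniv⟩
  obtain ⟨a, ha⟩ := hP.nonempty hV
  exact Finset.mem_singleton.mpr (hP.eq_of_mem hV huniv ha (Finset.mem_univ a))

theorem IsPartition.card_lt {P : Finset (Finset (Fin n))} (hP : IsPartition P)
    (hne : P ≠ {Finset.univ}) {V : Finset (Fin n)} (hV : V ∈ P) : V.card < n := by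
  refine lt_of_le_of_ne (Finset.card_le_univ V |>.trans_eq (Fintype.card_fin n)) fun h => ?_
  have : V = Finset.univ := Finset.eq_univ_of_card V (h.trans (Fintype.card_fin n).symm)
  exact hne (hP.eq_singleton_univ (this ▸ hV))

theorem isPartition_singleton_univ (hn : 0 < n) : IsPartition {(Finset.univ : Finset (Fin n))} :=
  ⟨fun h => (Finset.univ_nonempty_iff.mpr ⟨⟨0, hn⟩⟩).ne_empty (Finset.mem_singleton.mp h).symm,
    fun a => ⟨Finset.univ, ⟨Finset.mem_singleton_self _, Finset.mem_univ a⟩,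
      fun _ hW => Finset.mem_singleton.mp hW.1⟩⟩

theorem isNC_singleton (V : Finset (Fin n)) : IsNC {V} := by
  rintro ⟨W₁, hW₁, W₂, hW₂, hne, -⟩
  exact hne ((Finset.mem_singleton.mp hW₁).trans (Finset.mem_singleton.mp hW₂).symm)

theorem isPartition_pair {V W : Finset (Fin n)} (hV : V.Nonempty) (hW : W.Nonempty)
    (hdisj : Disjoint V W) (hcover : V ∪ W = Finset.univ) : IsPartition {V, W} := by
  refine ⟨?_, fun a => ?_⟩
  · simp only [Finset.mem_insert, Finset.mem_singleton, not_or]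
    exact ⟨hV.ne_empty.symm, hW.ne_empty.symm⟩
  have ha : a ∈ V ∨ a ∈ W := Finset.mem_union.mp (hcover ▸ Finset.mem_univ a)
  have hex : ∃ U, U ∈ ({V, W} : Finset (Finset (Fin n))) ∧ a ∈ U := by
    rcases ha with ha | ha
    · exact ⟨V, by simp, ha⟩
    · exact ⟨W, by simp, ha⟩
  refine existsUnique_of_exists_of_unique hex ?_
  rintro U₁ U₂ ⟨hU₁, ha₁⟩ ⟨hU₂, ha₂⟩
  simp only [Finset.mem_insert, Finset.mem_singleton] at hU₁ hU₂
  rcases hU₁ with rfl | rfl <;> rcases hU₂ with rfl | rfl <;>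
    first
    | rfl
    | exact absurd ha₂ (Finset.disjoint_left.mp hdisj ha₁)
    | exact absurd ha₁ (Finset.disjoint_left.mp hdisj ha₂)

theorem isNC_of_le_three (hn : n ≤ 3) (P : Finset (Finset (Fin n))) : IsNC P := by
  rintro ⟨-, -, -, -, -, a, b, c, d, hab, hbc, hcd, -⟩
  have := d.isLt
  simp only [Fin.lt_def] at hab hbc hcd
  omega

@[simp]
theorem mem_partitions {P : Finset (Finset (Fin n))} : P ∈ partitions n ↔ IsPartition P := by
  simp [partitions]

theorem ncPartitions_of_le_three (hn : n ≤ 3) : ncPartitions n = partitions n := by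
  ext P
  simp [ncPartitions, partitions, isNC_of_le_three hn]

end Partitions

section Relabel

variable {n : ℕ}

theorem sigmaChi_bijective (χ : Fin n → Bool) : Function.Bijective (sigmaChi χ) := by
  set l := (List.finRange n).filter χ ++ ((List.finRange n).filter (fun j => !(χ j))).reverse
  have hperm : l.Perm (List.finRange n) :=
    ((List.perm_append_left_iff _).mpr (List.reverse_perm _)).trans
      (List.filter_append_perm χ (List.finRange n))
  have hlen : l.length = n := hperm.length_eq.trans (List.length_finRange)
  have hnodup : l.Nodup := hperm.nodup_iff.mpr (List.nodup_finRange n)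
  have hget : ∀ i : Fin n, sigmaChi χ i = l[i.1]'(i.2.trans_eq hlen.symm) := fun i =>
    List.getD_eq_getElem l i (i.2.trans_eq hlen.symm)
  refine Finite.injective_iff_bijective.mp fun i j hij => ?_
  rw [hget, hget, hnodup.getElem_inj_iff] at hij
  exact Fin.ext hij

theorem relabel_injective {σ : Fin n → Fin n} (hσ : σ.Injective) :
    (relabel σ).Injective :=
  Finset.image_injective (Finset.image_injective hσ)

theorem IsPartition.relabel {σ : Fin n → Fin n} (hσ : σ.Bijective)
    {P : Finset (Finset (Fin n))} (hP : IsPartition P) : IsPartition (relabel σ P) := by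
  refine ⟨fun h => ?_, fun b => ?_⟩
  · obtain ⟨V, hV, hVe⟩ := Finset.mem_image.mp h
    exact (hP.nonempty hV).ne_empty (Finset.image_eq_empty.mp hVe)
  obtain ⟨a, rfl⟩ := hσ.2 b
  obtain ⟨V, ⟨hV, haV⟩, -⟩ := hP.2 a
  refine ⟨V.image σ, ⟨Finset.mem_image_of_mem _ hV, Finset.mem_image_of_mem _ haV⟩, ?_⟩
  rintro _ ⟨hσW, haW⟩
  obtain ⟨W, hW, rfl⟩ := Finset.mem_image.mp hσW
  obtain ⟨a', ha'W, ha'⟩ := Finset.mem_image.mp haW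
  obtain rfl : a' = a := hσ.1 ha'
  rw [hP.eq_of_mem hW hV ha'W haV]

theorem image_relabel_partitions {σ : Fin n → Fin n} (hσ : σ.Bijective) :
    (partitions n).image (relabel σ) = partitions n := by
  refine Finset.eq_of_subset_of_card_le (fun Q hQ => ?_) ?_
  · obtain ⟨P, hP, rfl⟩ := Finset.mem_image.mp hQ
    exact mem_partitions.mpr ((mem_partitions.mp hP).relabel hσ)
  · rw [Finset.card_image_of_injective _ (relabel_injective hσ.1)]

theorem pchiF_eq_image_relabel (χ : Fin n → Bool) :
    PchiF n χ = (ncPartitions n).image (relabel (sigmaChi χ)) :=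
  rfl

theorem pchiF_of_le_three (hn : n ≤ 3) (χ : Fin n → Bool) : PchiF n χ = ncPartitions n := by
  rw [pchiF_eq_image_relabel, ncPartitions_of_le_three hn,
    image_relabel_partitions (sigmaChi_bijective χ)]

end Relabel

section FourPoints

theorem isPartition_crossingPairing : IsPartition crossingPairing :=
  isPartition_pair (by decide) (by decide) (by decide) (by decide)

theorem isPartition_nestedPairing : IsPartition nestedPairing :=
  isPartition_pair (by decide) (by decide) (by decide) (by decide)

theorem not_isNC_crossingPairing : ¬ IsNC crossingPairing :=
  fun h => h ⟨{0, 2}, by decide, {1, 3}, by decide, by decide, 0, 1, 2, 3, by decide⟩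

theorem IsPartition.eq_crossingPairing_of_not_isNC {P : Finset (Finset (Fin 4))}
    (hP : IsPartition P) (hcross : ¬ IsNC P) : P = crossingPairing := by
  obtain ⟨V, hV, W, hW, hVW, a, b, c, d, hab, hbc, hcd, haV, hcV, hbW, hdW⟩ :=
    not_not.mp hcross
  have hchain : ∀ a b c d : Fin 4, a < b → b < c → c < d → a = 0 ∧ b = 1 ∧ c = 2 ∧ d = 3 := by
    decide
  obtain ⟨rfl, rfl, rfl, rfl⟩ := hchain a b c d hab hbc hcd
  have hdisj := hP.disjoint_of_ne hV hW hVW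
  have hcover : V ∪ W = Finset.univ := Finset.eq_univ_of_forall fun x => by
    fin_cases x <;> simp [haV, hbW, hcV, hdW]
  have hV' : V = {0, 2} := by
    refine le_antisymm (fun x hx => ?_)
      (Finset.insert_subset haV (Finset.singleton_subset_iff.mpr hcV))
    fin_cases x
    all_goals first
      | decide
      | exact absurd hbW (Finset.disjoint_left.mp hdisj hx)
      | exact absurd hdW (Finset.disjoint_left.mp hdisj hx)
  have hW' : W = {1, 3} := by
    refine le_antisymm (fun x hx => ?_)
      (Finset.insert_subset hbW (Finset.singleton_subset_iff.mpr hdW))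
    fin_cases x
    all_goals first
      | decide
      | exact absurd haV (Finset.disjoint_right.mp hdisj hx)
      | exact absurd hcV (Finset.disjoint_right.mp hdisj hx)
  rw [hP.eq_pair_of_union_eq_univ hV hW hcover, hV', hW', crossingPairing]

theorem ncPartitions_four : ncPartitions 4 = (partitions 4).erase crossingPairing := by
  ext P
  simp only [ncPartitions, Finset.mem_filter, Finset.mem_erase, Finset.mem_univ, true_and,
    mem_partitions]
  refine ⟨fun ⟨hP, hNC⟩ => ⟨fun h => not_isNC_crossingPairing (h ▸ hNC), hP⟩,
    fun ⟨hne, hP⟩ => ⟨hP, ?_⟩⟩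
  by_contra hcross
  exact hne (hP.eq_crossingPairing_of_not_isNC hcross)

theorem relabel_sigmaChi_crossingPairing :
    relabel (sigmaChi ![true, false, true, false]) crossingPairing = nestedPairing := by
  decide

theorem pchiF_lrlr_eq_erase_nestedPairing :
    PchiF 4 ![true, false, true, false] = (partitions 4).erase nestedPairing := by
  rw [pchiF_eq_image_relabel, ncPartitions_four,
    Finset.image_erase (relabel_injective (sigmaChi_bijective _).1),
    image_relabel_partitions (sigmaChi_bijective _), relabel_sigmaChi_crossingPairing]

end FourPoints

section Restriction

variable {n : ℕ} {α : Type*}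

theorem restr_eq_comp_of_strictMono {k : ℕ} {V : Finset (Fin n)} (hk : V.card = k)
    {e : Fin k → Fin n} (he : StrictMono e) (hmem : ∀ i, e i ∈ V) (x : Fin n → α) :
    restr x V = (x ∘ e) ∘ Fin.cast hk := by
  have h := Finset.orderEmbOfFin_unique rfl (f := e ∘ Fin.cast hk) (fun i => hmem _)
    (he.comp (Fin.cast_strictMono hk))
  funext i
  simp only [restr, Finset.coe_orderIsoOfFin_apply, ← h, Function.comp]

theorem restr_univ (x : Fin n → α) :
    restr x Finset.univ = x ∘ Fin.cast (Finset.card_fin n) :=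
  restr_eq_comp_of_strictMono _ strictMono_id (fun _ => Finset.mem_univ _) x

theorem restr_pair {i j : Fin n} (hij : i < j) (x : Fin n → α) :
    restr x {i, j} = ![x i, x j] ∘ Fin.cast (Finset.card_pair hij.ne) := by
  have hmono : StrictMono ![i, j] :=
    Fin.strictMono_iff_lt_succ.mpr fun k => by fin_cases k; exact hij
  have hmem : ∀ k, ![i, j] k ∈ ({i, j} : Finset (Fin n)) := fun k => by fin_cases k <;> simp
  rw [restr_eq_comp_of_strictMono (Finset.card_pair hij.ne) hmono hmem]
  congr 1
  funext k
  fin_cases k <;> rfl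

end Restriction

section CumulantProducts

variable {A : Type*} [AddCommMonoid A] [Module ℂ A]
  (κ : (m : ℕ) → (Fin m → Bool) → MultilinearMap ℂ (fun _ : Fin m => A) ℂ)
  (κf : (m : ℕ) → MultilinearMap ℂ (fun _ : Fin m => A) ℂ)

noncomputable def lrCumulantProd {n : ℕ} (χ : Fin n → Bool) (a : Fin n → A)
    (π : Finset (Finset (Fin n))) : ℂ :=
  ∏ V ∈ π, κ V.card (restr χ V) (restr a V)

noncomputable def freeCumulantProd {n : ℕ} (a : Fin n → A) (π : Finset (Finset (Fin n))) : ℂ :=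
  ∏ V ∈ π, κf V.card (restr a V)

theorem lrCumulant_comp_cast {m k : ℕ} (h : m = k) (χ : Fin k → Bool) (a : Fin k → A) :
    κ m (χ ∘ Fin.cast h) (a ∘ Fin.cast h) = κ k χ a := by
  subst h
  rfl

theorem freeCumulant_comp_cast {m k : ℕ} (h : m = k) (a : Fin k → A) :
    κf m (a ∘ Fin.cast h) = κf k a := by
  subst h
  rfl

theorem lrCumulantProd_singleton_univ {n : ℕ} (χ : Fin n → Bool) (a : Fin n → A) :
    lrCumulantProd κ χ a {Finset.univ} = κ n χ a := by
  rw [lrCumulantProd, Finset.prod_singleton, restr_univ, restr_univ, lrCumulant_comp_cast]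

theorem freeCumulantProd_singleton_univ {n : ℕ} (a : Fin n → A) :
    freeCumulantProd κf a {Finset.univ} = κf n a := by
  rw [freeCumulantProd, Finset.prod_singleton, restr_univ, freeCumulant_comp_cast]

theorem freeCumulantProd_pair {n : ℕ} (a : Fin n → A) {i j k l : Fin n} (hij : i < j)
    (hkl : k < l) (hne : ({i, j} : Finset (Fin n)) ≠ {k, l}) :
    freeCumulantProd κf a {{i, j}, {k, l}} = κf 2 ![a i, a j] * κf 2 ![a k, a l] := by
  rw [freeCumulantProd, Finset.prod_pair hne, restr_pair hij, restr_pair hkl,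
    freeCumulant_comp_cast, freeCumulant_comp_cast]

variable {κ κf}

theorem lrCumulantProd_eq_freeCumulantProd {n : ℕ}
    (hlow : ∀ m, 0 < m → m < n → ∀ χ a, κ m χ a = κf m a) (χ : Fin n → Bool) (a : Fin n → A)
    {π : Finset (Finset (Fin n))} (hπ : IsPartition π) (hne : π ≠ {Finset.univ}) :
    lrCumulantProd κ χ a π = freeCumulantProd κf a π :=
  Finset.prod_congr rfl fun _ hV =>
    hlow _ (hπ.nonempty hV).card_pos (hπ.card_lt hne hV) _ _

theorem sum_lrCumulantProd_sub_sum_freeCumulantProd {n : ℕ}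
    (hlow : ∀ m, 0 < m → m < n → ∀ χ a, κ m χ a = κf m a) (χ : Fin n → Bool) (a : Fin n → A)
    {S : Finset (Finset (Finset (Fin n)))} (hS : S ⊆ partitions n)
    (huniv : {Finset.univ} ∈ S) :
    ∑ π ∈ S, lrCumulantProd κ χ a π - ∑ π ∈ S, freeCumulantProd κf a π = κ n χ a - κf n a := by
  rw [← Finset.sum_sub_distrib, Finset.sum_eq_single_of_mem _ huniv fun π hπ hne => ?_,
    lrCumulantProd_singleton_univ, freeCumulantProd_singleton_univ]
  have hπ' : IsPartition π := mem_partitions.mp (hS hπ)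
  rw [lrCumulantProd_eq_freeCumulantProd hlow χ a hπ' hne, sub_self]

end CumulantProducts

section Moments

variable {A : Type*} [Ring A] [Algebra ℂ A] {φ : A →ₗ[ℂ] ℂ}
  {κ : (m : ℕ) → (Fin m → Bool) → MultilinearMap ℂ (fun _ : Fin m => A) ℂ}
  {κf : (m : ℕ) → MultilinearMap ℂ (fun _ : Fin m => A) ℂ}

theorem ncPartitions_subset_partitions (n : ℕ) : ncPartitions n ⊆ partitions n :=
  fun _ hP => mem_partitions.mpr (Finset.mem_filter.mp hP).2.1

theorem singleton_univ_mem_ncPartitions {n : ℕ} (hn : 0 < n) :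
    {Finset.univ} ∈ ncPartitions n :=
  Finset.mem_filter.mpr ⟨Finset.mem_univ _, isPartition_singleton_univ hn, isNC_singleton _⟩

theorem lrCumulant_eq_freeCumulant_of_pchiF_eq (hκ : momentFormula φ κ)
    (hκf : freeFormula φ κf) {n : ℕ} (hn : 0 < n) {χ : Fin n → Bool}
    (hP : PchiF n χ = ncPartitions n) (hlow : ∀ m, 0 < m → m < n → ∀ χ a, κ m χ a = κf m a)
    (a : Fin n → A) : κ n χ a = κf n a := by
  have hmom : φ (List.ofFn a).prod = ∑ π ∈ ncPartitions n, lrCumulantProd κ χ a π :=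
    hP ▸ hκ n hn χ a
  have hfree : φ (List.ofFn a).prod = ∑ π ∈ ncPartitions n, freeCumulantProd κf a π :=
    hκf n hn a
  rw [← sub_eq_zero, ← sum_lrCumulantProd_sub_sum_freeCumulantProd hlow χ a
    (ncPartitions_subset_partitions n) (singleton_univ_mem_ncPartitions hn), ← hmom, ← hfree,
    sub_self]

theorem lrCumulant_eq_freeCumulant_of_le_three (hκ : momentFormula φ κ)
    (hκf : freeFormula φ κf) (n : ℕ) (hn : 0 < n) (hn3 : n ≤ 3) (χ : Fin n → Bool)
    (a : Fin n → A) : κ n χ a = κf n a := by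
  induction n using Nat.strong_induction_on with
  | _ n ih =>
    exact lrCumulant_eq_freeCumulant_of_pchiF_eq hκ hκf hn (pchiF_of_le_three hn3 χ)
      (fun m hm hmn => ih m hmn hm (hmn.le.trans hn3)) a

end Moments

theorem stmt18_general (A : Type*) [Ring A] [Algebra ℂ A] (φ : A →ₗ[ℂ] ℂ)
    (κ : (m : ℕ) → (Fin m → Bool) → MultilinearMap ℂ (fun _ : Fin m => A) ℂ)
    (hκ : momentFormula φ κ)
    (κf : (m : ℕ) → MultilinearMap ℂ (fun _ : Fin m => A) ℂ)
    (hκf : freeFormula φ κf) :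
    ∀ a : Fin 4 → A,
      κ 4 ![true, false, true, false] a =
        κf 4 a + κf 2 ![a 0, a 3] * κf 2 ![a 1, a 2]
          - κf 2 ![a 0, a 2] * κf 2 ![a 1, a 3] := by
  intro a
  set χ : Fin 4 → Bool := ![true, false, true, false]
  have hlow : ∀ m, 0 < m → m < 4 → ∀ χ a, κ m χ a = κf m a := fun m hm hm4 =>
    lrCumulant_eq_freeCumulant_of_le_three hκ hκf m hm (Nat.le_of_lt_succ hm4)
  have hmom : φ (List.ofFn a).prod =
      ∑ π ∈ (partitions 4).erase nestedPairing, lrCumulantProd κ χ a π :=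
    pchiF_lrlr_eq_erase_nestedPairing ▸ hκ 4 (by norm_num) χ a
  have hfree : φ (List.ofFn a).prod =
      ∑ π ∈ (partitions 4).erase crossingPairing, freeCumulantProd κf a π :=
    ncPartitions_four ▸ hκf 4 (by norm_num) a
  have hdiff := sum_lrCumulantProd_sub_sum_freeCumulantProd hlow χ a
    subset_rfl (mem_partitions.mpr (isPartition_singleton_univ (by norm_num)))
  rw [← Finset.sum_erase_add _ _ (mem_partitions.mpr isPartition_nestedPairing),
    ← Finset.sum_erase_add _ _ (mem_partitions.mpr isPartition_crossingPairing), ← hmom, ← hfree,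
    lrCumulantProd_eq_freeCumulantProd hlow χ a isPartition_nestedPairing (by decide)] at hdiff
  rw [nestedPairing, crossingPairing,
    freeCumulantProd_pair κf a (by decide) (by decide) (by decide),
    freeCumulantProd_pair κf a (by decide) (by decide) (by decide)] at hdiff
  linear_combination -hdiff

/-- In any noncommutative probability space, for `a_1, a_2, a_3, a_4` one has
`κ_{(ℓ,r,ℓ,r)}(a_1,a_2,a_3,a_4) = κ_4(a_1,a_2,a_3,a_4) + κ_2(a_1,a_4)κ_2(a_2,a_3)
− κ_2(a_1,a_3)κ_2(a_2,a_4)`, where `κ_2, κ_4` are free cumulants. -/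
theorem stmt18 (A : Type*) [Ring A] [Algebra ℂ A] (φ : A →ₗ[ℂ] ℂ) (hφ : φ 1 = 1)
    (κ : (m : ℕ) → (Fin m → Bool) → MultilinearMap ℂ (fun _ : Fin m => A) ℂ)
    (hκ : momentFormula φ κ)
    (κf : (m : ℕ) → MultilinearMap ℂ (fun _ : Fin m => A) ℂ)
    (hκf : freeFormula φ κf) :
    ∀ a : Fin 4 → A,
      κ 4 ![true, false, true, false] a =
        κf 4 a + κf 2 ![a 0, a 3] * κf 2 ![a 1, a 2]
          - κf 2 ![a 0, a 2] * κf 2 ![a 1, a 3] :=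
  stmt18_general A φ κ hκ κf hκf
end

section
/- Let (A, φ) be a *-probability space (φ(a*) = conjugate of φ(a) for all a). Then the (ℓ,r)-cumulants satisfy κ_χ(a_1*, ..., a_n*) = conjugate of κ_{χ_opp}(a_n, ..., a_1), for all n ≥ 1, χ ∈ {ℓ,r}^n, and a_1, ..., a_n ∈ A, where χ_opp is the reversal of χ. -/
open scoped Classical

namespace St19

variable {n : ℕ}

/-! ### List-level facts about `sigmaChi` -/

def sigList (n : ℕ) (χ : Fin n → Bool) : List (Fin n) :=
  ((List.finRange n).filter χ) ++ (((List.finRange n).filter (fun j => !(χ j))).reverse)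

lemma sigList_perm (χ : Fin n → Bool) : (sigList n χ).Perm (List.finRange n) := by
  refine List.Perm.trans (List.Perm.append_left _ ((List.reverse_perm _))) ?_
  exact List.filter_append_perm _ _

lemma sigList_length (χ : Fin n → Bool) : (sigList n χ).length = n := by
  rw [(sigList_perm χ).length_eq, List.length_finRange]

lemma sigList_nodup (χ : Fin n → Bool) : (sigList n χ).Nodup :=
  (sigList_perm χ).nodup_iff.mpr (List.nodup_finRange n)

lemma sigmaChi_eq_getElem (χ : Fin n → Bool) (i : Fin n) :
    sigmaChi χ i = (sigList n χ)[i.val]'(by rw [sigList_length]; exact i.2) := by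
  exact List.getD_eq_getElem _ _ _

lemma sigmaChi_injective (χ : Fin n → Bool) : Function.Injective (sigmaChi χ) := by
  intro i j h
  rw [sigmaChi_eq_getElem, sigmaChi_eq_getElem] at h
  exact Fin.ext (((sigList_nodup χ).getElem_inj_iff).mp h)

lemma sigmaChi_bijective (χ : Fin n → Bool) : Function.Bijective (sigmaChi χ) :=
  (Finite.injective_iff_bijective).mp (sigmaChi_injective χ)

lemma map_rev_finRange : (List.finRange n).map Fin.rev = (List.finRange n).reverse := by
  apply List.ext_getElem (by simp)
  intro i h1 h2
  simp only [List.getElem_map, List.getElem_reverse, List.getElem_finRange,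
    List.length_finRange]
  ext
  simp only [Fin.val_rev, Fin.cast_mk]
  simp only [List.length_map, List.length_finRange] at h1
  omega

lemma filter_opp (p : Fin n → Bool) :
    (List.finRange n).filter (fun j => p j.rev) =
      (((List.finRange n).filter p).map Fin.rev).reverse := by
  have h1 : (List.finRange n) = ((List.finRange n).map Fin.rev).reverse := by
    rw [map_rev_finRange, List.reverse_reverse]
  conv_lhs => rw [h1]
  rw [List.filter_reverse, List.filter_map]
  congr 1
  · congr 1
    · simp only [Function.comp_def, Fin.rev_rev]

/-! ### Rotations of `Fin n` -/

def rot1 (x : Fin n) : Fin n :=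
  ⟨(x.val + 1) % n, Nat.mod_lt _ (Nat.lt_of_le_of_lt (Nat.zero_le _) x.2)⟩

def rotInv (x : Fin n) : Fin n :=
  ⟨(x.val + (n - 1)) % n, Nat.mod_lt _ (Nat.lt_of_le_of_lt (Nat.zero_le _) x.2)⟩

lemma rotInv_rot1 (x : Fin n) : rotInv (rot1 x) = x := by
  have hx := x.2
  ext
  show ((x.val + 1) % n + (n - 1)) % n = x.val
  rw [Nat.mod_add_mod, show x.val + 1 + (n - 1) = x.val + n by omega,
    Nat.add_mod_right, Nat.mod_eq_of_lt hx]

lemma rotInv_val_pos (x : Fin n) (h : 0 < x.val) : (rotInv x).val = x.val - 1 := by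
  have hx := x.2
  show (x.val + (n - 1)) % n = x.val - 1
  rw [show x.val + (n - 1) = (x.val - 1) + n by omega, Nat.add_mod_right,
    Nat.mod_eq_of_lt (by omega)]

lemma rotInv_val_zero (x : Fin n) (h : x.val = 0) : (rotInv x).val = n - 1 := by
  have hx := x.2
  show (x.val + (n - 1)) % n = n - 1
  rw [h, Nat.zero_add, Nat.mod_eq_of_lt (by omega)]

lemma rot1_iterate_val (m : ℕ) (x : Fin n) : ((rot1^[m]) x).val = (x.val + m) % n := by
  induction m with
  | zero => simp [Nat.mod_eq_of_lt x.2]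
  | succ m ih =>
    rw [Function.iterate_succ_apply']
    show ((rot1^[m] x).val + 1) % n = _
    rw [ih, Nat.mod_add_mod]
    congr 1

lemma rot1_injective : Function.Injective (rot1 : Fin n → Fin n) := by
  intro x y h
  have := congrArg (fun z => (rotInv z)) h
  simpa [rotInv_rot1] using this

lemma rot1_bijective : Function.Bijective (rot1 : Fin n → Fin n) :=
  (Finite.injective_iff_bijective).mp rot1_injective

/-! ### `σ` and reversal -/

lemma sigList_opp (χ : Fin n → Bool) :
    sigList n (fun j => χ j.rev) =
      (((List.finRange n).filter χ).map Fin.rev).reverse ++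
        ((List.finRange n).filter (fun j => !(χ j))).map Fin.rev := by
  unfold sigList
  rw [filter_opp χ]
  congr 1
  rw [show (fun j : Fin n => !(χ j.rev)) = (fun j : Fin n => (fun x => !(χ x)) j.rev) from rfl,
    filter_opp (fun x => !(χ x)), List.reverse_reverse]

lemma rev_sigmaChi (χ : Fin n → Bool) (i : Fin n) :
    Fin.rev (sigmaChi χ i) =
      sigmaChi (fun j => χ j.rev) (rot1^[((List.finRange n).filter χ).length] (Fin.rev i)) := by
  set L := (List.finRange n).filter χ with hLdef
  set R := (List.finRange n).filter (fun j => !(χ j)) with hRdef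
  set k := L.length with hk
  have hsum : L.length + R.length = n := by
    have := (List.filter_append_perm χ (List.finRange n)).length_eq
    simpa [List.length_append] using this
  have hi := i.2
  set j := rot1^[k] (Fin.rev i) with hjdef
  have hj : j.val = (n - (i.val + 1) + k) % n := by
    rw [hjdef, rot1_iterate_val, Fin.val_rev]
  rw [sigmaChi_eq_getElem, sigmaChi_eq_getElem]
  have hsl : sigList n χ = L ++ R.reverse := rfl
  have hslo : sigList n (fun j => χ j.rev) = (L.map Fin.rev).reverse ++ R.map Fin.rev :=
    sigList_opp χ
  rcases Nat.lt_or_ge i.val k with hik | hik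
  · have hkn : k ≤ n := by omega
    have hjv : j.val = k - 1 - i.val := by
      rw [hj, show n - (i.val + 1) + k = (k - 1 - i.val) + n by omega,
        Nat.add_mod_right, Nat.mod_eq_of_lt (by omega)]
    simp only [hsl, hslo, hjv]
    rw [List.getElem_append_left (by simpa using hik),
      List.getElem_append_left (by simp; omega),
      List.getElem_reverse, List.getElem_map]
    congr 1
    simp only [List.length_map]
    congr 1
    omega
  · have hjv : j.val = n - 1 - i.val + k := by
      rw [hj, show n - (i.val + 1) + k = n - 1 - i.val + k by omega,
        Nat.mod_eq_of_lt (by omega)]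
    simp only [hsl, hslo, hjv]
    rw [List.getElem_append_right (by simpa using hik),
      List.getElem_append_right (by simp only [List.length_reverse, List.length_map]; omega),
      List.getElem_reverse, List.getElem_map]
    congr 1
    simp only [List.length_reverse, List.length_map]
    congr 1
    omega

/-! ### Preservation of (noncrossing) partitions under images -/

lemma isPartition_image {f : Fin n → Fin n} (hf : Function.Bijective f)
    {P : Finset (Finset (Fin n))} (hP : IsPartition P) :
    IsPartition (P.image (Finset.image f)) := by
  obtain ⟨h0, hu⟩ := hP
  constructor
  · intro h
    rw [Finset.mem_image] at h
    obtain ⟨V, hV, hVe⟩ := h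
    rw [Finset.image_eq_empty] at hVe
    exact h0 (hVe ▸ hV)
  · intro a
    obtain ⟨b, hb⟩ := hf.2 a
    obtain ⟨V, ⟨hVP, hbV⟩, hVu⟩ := hu b
    refine ⟨V.image f, ⟨Finset.mem_image_of_mem _ hVP, hb ▸ Finset.mem_image_of_mem _ hbV⟩, ?_⟩
    rintro W ⟨hWP, haW⟩
    rw [Finset.mem_image] at hWP
    obtain ⟨V', hV'P, rfl⟩ := hWP
    rw [Finset.mem_image] at haW
    obtain ⟨x, hxV', hxa⟩ := haW
    have : x = b := hf.1 (by rw [hxa, hb])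
    subst this
    rw [hVu V' ⟨hV'P, hxV'⟩]

lemma isNC_image_rot1 {P : Finset (Finset (Fin n))} (hP : IsNC P) :
    IsNC (P.image (Finset.image rot1)) := by
  rintro ⟨V', hV', W', hW', hne, a, b, c, d, hab, hbc, hcd, haV, hcV, hbW, hdW⟩
  rw [Finset.mem_image] at hV' hW'
  obtain ⟨V, hVP, rfl⟩ := hV'
  obtain ⟨W, hWP, rfl⟩ := hW'
  have hVW : V ≠ W := fun h => hne (by rw [h])
  have pre : ∀ {U : Finset (Fin n)} {x : Fin n}, x ∈ U.image rot1 → rotInv x ∈ U := by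
    intro U x hx
    rw [Finset.mem_image] at hx
    obtain ⟨y, hy, rfl⟩ := hx
    rwa [rotInv_rot1]
  have ha := pre haV; have hc := pre hcV; have hb := pre hbW; have hd := pre hdW
  have hd2 := d.2
  rcases Nat.eq_zero_or_pos a.val with h0 | h0
  · refine hP ⟨W, hWP, V, hVP, hVW.symm, rotInv b, rotInv c, rotInv d, rotInv a,
      ?_, ?_, ?_, hb, hd, hc, ha⟩
    · rw [Fin.lt_def, rotInv_val_pos _ (by omega), rotInv_val_pos _ (by omega)]; omega
    · rw [Fin.lt_def, rotInv_val_pos _ (by omega), rotInv_val_pos _ (by omega)]; omega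
    · rw [Fin.lt_def, rotInv_val_pos _ (by omega), rotInv_val_zero _ h0]; omega
  · refine hP ⟨V, hVP, W, hWP, hVW, rotInv a, rotInv b, rotInv c, rotInv d,
      ?_, ?_, ?_, ha, hc, hb, hd⟩ <;>
    · rw [Fin.lt_def, rotInv_val_pos _ (by omega), rotInv_val_pos _ (by omega)]
      omega

lemma isNC_image_rev {P : Finset (Finset (Fin n))} (hP : IsNC P) :
    IsNC (P.image (Finset.image Fin.rev)) := by
  rintro ⟨V', hV', W', hW', hne, a, b, c, d, hab, hbc, hcd, haV, hcV, hbW, hdW⟩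
  rw [Finset.mem_image] at hV' hW'
  obtain ⟨V, hVP, rfl⟩ := hV'
  obtain ⟨W, hWP, rfl⟩ := hW'
  have hVW : V ≠ W := fun h => hne (by rw [h])
  have pre : ∀ {U : Finset (Fin n)} {x : Fin n}, x ∈ U.image Fin.rev → Fin.rev x ∈ U := by
    intro U x hx
    rw [Finset.mem_image] at hx
    obtain ⟨y, hy, rfl⟩ := hx
    rwa [Fin.rev_rev]
  have ha := pre haV; have hc := pre hcV; have hb := pre hbW; have hd := pre hdW
  exact hP ⟨W, hWP, V, hVP, hVW.symm, Fin.rev d, Fin.rev c, Fin.rev b, Fin.rev a,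
    by rwa [Fin.rev_lt_rev], by rwa [Fin.rev_lt_rev], by rwa [Fin.rev_lt_rev],
    hd, hb, hc, ha⟩

lemma isNC_image_rot1_iter (m : ℕ) {P : Finset (Finset (Fin n))} (hP : IsNC P) :
    IsNC (P.image (Finset.image (rot1^[m]))) := by
  induction m with
  | zero =>
    have : P.image (Finset.image (rot1^[0])) = P := by
      simp only [Function.iterate_zero]
      rw [show Finset.image (id : Fin n → Fin n) = id from funext fun s => Finset.image_id]
      exact Finset.image_id
    rwa [this]
  | succ m ih =>
    have : P.image (Finset.image (rot1^[m + 1])) =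
        (P.image (Finset.image (rot1^[m]))).image (Finset.image rot1) := by
      rw [Finset.image_image]
      congr 1
      funext V
      rw [Function.comp_apply, Finset.image_image, Function.iterate_succ']
    rw [this]
    exact isNC_image_rot1 ih

/-! ### `PchiF` facts -/

lemma mem_PchiF_iff {χ : Fin n → Bool} {π : Finset (Finset (Fin n))} :
    π ∈ PchiF n χ ↔ ∃ P, (IsPartition P ∧ IsNC P) ∧
      P.image (Finset.image (sigmaChi χ)) = π := by
  unfold PchiF
  simp [Finset.mem_image, Finset.mem_filter]

lemma rev_image_mem_PchiF {χ : Fin n → Bool} {π : Finset (Finset (Fin n))}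
    (hπ : π ∈ PchiF n χ) :
    π.image (Finset.image Fin.rev) ∈ PchiF n (fun j => χ j.rev) := by
  rw [mem_PchiF_iff] at hπ ⊢
  obtain ⟨P, ⟨hP1, hP2⟩, rfl⟩ := hπ
  set k := ((List.finRange n).filter χ).length with hk
  refine ⟨(P.image (Finset.image Fin.rev)).image (Finset.image (rot1^[k])), ⟨⟨?_, ?_⟩, ?_⟩, ?_⟩
  · exact (isPartition_image (Function.Bijective.iterate rot1_bijective k)
      (isPartition_image (Fin.rev_involutive.bijective) hP1)).1
  · exact (isPartition_image (Function.Bijective.iterate rot1_bijective k)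
      (isPartition_image (Fin.rev_involutive.bijective) hP1)).2
  · exact isNC_image_rot1_iter k (isNC_image_rev hP2)
  · rw [Finset.image_image, Finset.image_image, Finset.image_image]
    congr 1
    funext V
    simp only [Function.comp_apply, Finset.image_image]
    congr 1
    funext i
    exact (rev_sigmaChi χ i).symm

lemma rev_image_involutive (π : Finset (Finset (Fin n))) :
    (π.image (Finset.image Fin.rev)).image (Finset.image Fin.rev) = π := by
  rw [Finset.image_image]
  have : (Finset.image (Fin.rev : Fin n → Fin n)) ∘ (Finset.image Fin.rev) = id := by
    funext V
    simp [Finset.image_image, Function.comp_def, Fin.rev_rev, Finset.image_id']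
  rw [this, Finset.image_id]

lemma blocks_nonempty {χ : Fin n → Bool} {π : Finset (Finset (Fin n))}
    (hπ : π ∈ PchiF n χ) {W : Finset (Fin n)} (hW : W ∈ π) : W.Nonempty := by
  rw [mem_PchiF_iff] at hπ
  obtain ⟨P, ⟨hP1, _⟩, rfl⟩ := hπ
  rw [Finset.mem_image] at hW
  obtain ⟨V, hV, rfl⟩ := hW
  have : V.Nonempty := by
    rcases V.eq_empty_or_nonempty with rfl | h
    · exact absurd hV hP1.1
    · exact h
  exact this.image _

lemma univ_mem_PchiF (hn : 0 < n) (χ : Fin n → Bool) :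
    ({Finset.univ} : Finset (Finset (Fin n))) ∈ PchiF n χ := by
  haveI : NeZero n := ⟨hn.ne'⟩
  rw [mem_PchiF_iff]
  refine ⟨{Finset.univ}, ⟨⟨?_, ?_⟩, ?_⟩, ?_⟩
  · rw [Finset.mem_singleton]
    intro h
    exact (Finset.univ_nonempty (α := Fin n)).ne_empty h.symm
  · intro a
    refine ⟨Finset.univ, ⟨Finset.mem_singleton_self _, Finset.mem_univ _⟩, ?_⟩
    rintro W ⟨hW, -⟩
    exact Finset.mem_singleton.mp hW
  · rintro ⟨V, hV, W, hW, hne, -⟩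
    rw [Finset.mem_singleton] at hV hW
    exact hne (hV.trans hW.symm)
  · rw [Finset.image_singleton, Finset.image_univ_of_surjective (sigmaChi_bijective χ).2]

lemma eq_singleton_of_univ_mem {χ : Fin n → Bool} {π : Finset (Finset (Fin n))}
    (hπ : π ∈ PchiF n χ) (hu : Finset.univ ∈ π) :
    π = {Finset.univ} := by
  rw [mem_PchiF_iff] at hπ
  obtain ⟨P, ⟨hP1, _⟩, rfl⟩ := hπ
  rw [Finset.mem_image] at hu
  obtain ⟨V, hV, hVu⟩ := hu
  have hVcard : V = Finset.univ := by
    have h1 : V.card = n := by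
      have := congrArg Finset.card hVu
      rw [Finset.card_image_of_injective _ (sigmaChi_bijective χ).1] at this
      simpa using this
    exact (Finset.card_eq_iff_eq_univ V).mp (h1.trans (Fintype.card_fin n).symm)
  subst hVcard
  have hP : P = {Finset.univ} := by
    apply Finset.eq_singleton_iff_unique_mem.mpr
    refine ⟨hV, ?_⟩
    intro W hW
    have hWne : W.Nonempty := by
      rcases W.eq_empty_or_nonempty with rfl | h
      · exact absurd hW hP1.1
      · exact h
    obtain ⟨a, ha⟩ := hWne
    obtain ⟨U, -, hUu⟩ := hP1.2 a
    rw [hUu W ⟨hW, ha⟩, hUu Finset.univ ⟨hV, Finset.mem_univ _⟩]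
  rw [hP, Finset.image_singleton,
    Finset.image_univ_of_surjective (sigmaChi_bijective χ).2]

/-! ### `restr` facts -/

lemma orderEmb_univ (h : (Finset.univ : Finset (Fin n)).card = n)
    (i : Fin (Finset.univ : Finset (Fin n)).card) :
    ((Finset.univ : Finset (Fin n)).orderIsoOfFin rfl i : Fin n) = Fin.cast h i := by
  rw [Finset.coe_orderIsoOfFin_apply]
  have : (fun j : Fin (Finset.univ : Finset (Fin n)).card => Fin.cast h j) =
      ⇑((Finset.univ : Finset (Fin n)).orderEmbOfFin rfl) := by
    apply Finset.orderEmbOfFin_unique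
    · intro x; exact Finset.mem_univ _
    · intro x y hxy
      rw [Fin.lt_def, Fin.coe_cast, Fin.coe_cast]
      exact hxy
  rw [← this]

lemma restr_univ {α : Type*} (x : Fin n → α) (h : (Finset.univ : Finset (Fin n)).card = n) :
    restr x Finset.univ = fun i => x (Fin.cast h i) := by
  funext i
  unfold restr
  rw [orderEmb_univ h]

lemma rev_orderEmb (V : Finset (Fin n)) (h : (V.image Fin.rev).card = V.card) :
    (fun j : Fin (V.image Fin.rev).card =>
        Fin.rev (V.orderEmbOfFin rfl (Fin.cast h j.rev))) =
      ⇑((V.image Fin.rev).orderEmbOfFin rfl) := by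
  apply Finset.orderEmbOfFin_unique
  · intro x
    exact Finset.mem_image_of_mem _ (Finset.orderEmbOfFin_mem _ _ _)
  · intro x y hxy
    rw [Fin.rev_lt_rev]
    apply (V.orderEmbOfFin rfl).strictMono
    have h2 := y.2
    rw [Fin.lt_def] at hxy ⊢
    simp only [Fin.coe_cast, Fin.val_rev]
    omega

lemma restr_opp {α : Type*} (x : Fin n → α) (V : Finset (Fin n))
    (h : (V.image Fin.rev).card = V.card) (i : Fin (V.image Fin.rev).card) :
    restr (fun j => x j.rev) (V.image Fin.rev) i = restr x V (Fin.cast h i.rev) := by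
  unfold restr
  rw [Finset.coe_orderIsoOfFin_apply, Finset.coe_orderIsoOfFin_apply,
    ← rev_orderEmb V h]
  simp [Fin.rev_rev]

/-! ### Miscellaneous -/

lemma star_list_prod {A : Type*} [Monoid A] [StarMul A] (l : List A) :
    star l.prod = (l.map star).reverse.prod := by
  induction l with
  | nil => simp
  | cons x l ih =>
    rw [List.prod_cons, star_mul, ih, List.map_cons, List.reverse_cons, List.prod_append,
      List.prod_singleton]

lemma ofFn_rev {α : Type*} (a : Fin n → α) :
    List.ofFn (fun i => a i.rev) = (List.ofFn a).reverse := by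
  apply List.ext_getElem (by simp)
  intro i h1 h2
  rw [List.getElem_ofFn, List.getElem_reverse, List.getElem_ofFn]
  congr 1
  ext
  simp only [Fin.val_rev, Fin.cast_mk]
  simp only [List.length_ofFn] at h1 h2 ⊢
  omega

lemma kcast {A : Type*} [Ring A] [Algebra ℂ A]
    (κ : (m : ℕ) → (Fin m → Bool) → MultilinearMap ℂ (fun _ : Fin m => A) ℂ)
    {m m' : ℕ} (h : m = m') (f : Fin m' → Bool) (b : Fin m' → A) :
    κ m' f b = κ m (fun i => f (Fin.cast h i)) (fun i => b (Fin.cast h i)) := by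
  subst h
  rfl

end St19

open St19 in
/-- Let `(A, φ)` be a `*`-probability space (`φ(a*)` is the conjugate of `φ(a)` for
all `a`).  Then the `(ℓ,r)`-cumulants satisfy
`κ_χ(a_1*, ..., a_n*) = conj (κ_{χ_opp}(a_n, ..., a_1))` for all `n ≥ 1`,
`χ ∈ {ℓ,r}^n` and `a_1, ..., a_n ∈ A`, where `χ_opp` is the reversal of `χ`. -/
theorem stmt19 (A : Type*) [Ring A] [StarRing A] [Algebra ℂ A]
    (φ : A →ₗ[ℂ] ℂ) (hφ : φ 1 = 1)
    (hstar : ∀ a : A, φ (star a) = starRingEnd ℂ (φ a))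
    (κ : (m : ℕ) → (Fin m → Bool) → MultilinearMap ℂ (fun _ : Fin m => A) ℂ)
    (hκ : momentFormula φ κ) :
    ∀ n : ℕ, 1 ≤ n → ∀ (χ : Fin n → Bool) (a : Fin n → A),
      κ n χ (fun i => star (a i)) =
        starRingEnd ℂ (κ n (fun i => χ i.rev) (fun i => a i.rev)) := by
  intro n
  induction n using Nat.strong_induction_on with
  | _ n IH =>
  intro hn χ a
  have hn0 : 0 < n := hn
  have key1 := hκ n hn χ (fun i => star (a i))
  have key2 := hκ n hn (fun i => χ i.rev) (fun i => a i.rev)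
  -- relation between the two moments
  have hprod : (List.ofFn (fun i => star (a i))).prod =
      star ((List.ofFn (fun i => a i.rev)).prod) := by
    rw [ofFn_rev a, star_list_prod, List.map_reverse, List.reverse_reverse, List.map_ofFn]
    rfl
  have hsum : (∑ π ∈ PchiF n χ,
        ∏ V ∈ π, κ V.card (restr χ V) (restr (fun i => star (a i)) V)) =
      ∑ π ∈ PchiF n (fun i => χ i.rev), (starRingEnd ℂ)
        (∏ V ∈ π, κ V.card (restr (fun i => χ i.rev) V) (restr (fun i => a i.rev) V)) := by
    rw [← key1, hprod, hstar, key2, map_sum]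
  have hu1 : ({Finset.univ} : Finset (Finset (Fin n))) ∈ PchiF n χ := univ_mem_PchiF hn0 χ
  have hu2 : ({Finset.univ} : Finset (Finset (Fin n))) ∈ PchiF n (fun i => χ i.rev) :=
    univ_mem_PchiF hn0 _
  rw [← Finset.add_sum_erase _ _ hu1, ← Finset.add_sum_erase _ _ hu2] at hsum
  -- the sums over the non-maximal partitions agree
  have herase : (∑ π ∈ (PchiF n χ).erase {Finset.univ},
        ∏ V ∈ π, κ V.card (restr χ V) (restr (fun i => star (a i)) V)) =
      ∑ π ∈ (PchiF n (fun i => χ i.rev)).erase {Finset.univ}, (starRingEnd ℂ)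
        (∏ V ∈ π, κ V.card (restr (fun i => χ i.rev) V) (restr (fun i => a i.rev) V)) := by
    refine Finset.sum_nbij' (fun π => π.image (Finset.image Fin.rev))
      (fun π => π.image (Finset.image Fin.rev)) ?_ ?_ ?_ ?_ ?_
    · intro π hπ
      rw [Finset.mem_erase] at hπ ⊢
      constructor
      · intro h
        have h' : π.image (Finset.image Fin.rev) = {Finset.univ} := h
        apply hπ.1
        rw [← rev_image_involutive π, h', Finset.image_singleton,
          Finset.image_univ_of_surjective Fin.rev_surjective]
      · exact rev_image_mem_PchiF hπ.2
    · intro π hπ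
      rw [Finset.mem_erase] at hπ ⊢
      constructor
      · intro h
        have h' : π.image (Finset.image Fin.rev) = {Finset.univ} := h
        apply hπ.1
        rw [← rev_image_involutive π, h', Finset.image_singleton,
          Finset.image_univ_of_surjective Fin.rev_surjective]
      · have := rev_image_mem_PchiF hπ.2
        have hχ : (fun j : Fin n => (fun i : Fin n => χ i.rev) j.rev) = χ := by
          funext j
          show χ j.rev.rev = χ j
          rw [Fin.rev_rev]
        rwa [hχ] at this
    · intro π hπ
      exact rev_image_involutive π
    · intro π hπ
      exact rev_image_involutive π
    · intro π hπ
      rw [Finset.mem_erase] at hπ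
      have hrw : ∀ V : Finset (Fin n), (V.image Fin.rev).image Fin.rev = V := by
        intro V
        rw [Finset.image_image]
        simp [Function.comp_def, Fin.rev_rev, Finset.image_id']
      show (∏ V ∈ π, κ V.card (restr χ V) (restr (fun i => star (a i)) V)) =
        (starRingEnd ℂ) (∏ V ∈ π.image (Finset.image Fin.rev),
          κ V.card (restr (fun i => χ i.rev) V) (restr (fun i => a i.rev) V))
      rw [Finset.prod_image (fun x _ y _ hxy => by rw [← hrw x, hxy, hrw y]), map_prod]
      refine Finset.prod_congr rfl ?_
      intro V hV
      have hVne : V.Nonempty := blocks_nonempty hπ.2 hV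
      have hVlt : V.card < n := by
        have hVle : V.card ≤ n := by simpa using Finset.card_le_univ V
        rcases lt_or_eq_of_le hVle with h | h
        · exact h
        · exfalso
          have hVu : V = Finset.univ :=
            (Finset.card_eq_iff_eq_univ V).mp (h.trans (Fintype.card_fin n).symm)
          exact hπ.1 (eq_singleton_of_univ_mem hπ.2 (hVu ▸ hV))
      have hIH := IH V.card hVlt (Finset.card_pos.mpr hVne) (restr χ V) (restr a V)
      have hc : (V.image Fin.rev).card = V.card :=
        Finset.card_image_of_injective _ Fin.rev_injective
      rw [show restr (fun i => star (a i)) V = (fun i => star (restr a V i)) from rfl, hIH]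
      congr 1
      have e1 : restr (fun i => χ i.rev) (V.image Fin.rev) =
          fun i => restr χ V (Fin.cast hc i.rev) := funext (restr_opp χ V hc)
      have e2 : restr (fun i => a i.rev) (V.image Fin.rev) =
          fun i => restr a V (Fin.cast hc i.rev) := funext (restr_opp a V hc)
      rw [kcast κ hc (fun i => restr χ V i.rev) (fun i => restr a V i.rev), e1, e2]
      have hcc := hc
      have e3 : ∀ i : Fin (V.image Fin.rev).card, (Fin.cast hc i).rev = Fin.cast hc i.rev := by
        intro i
        ext
        simp only [Fin.val_rev, Fin.coe_cast]
        omega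
      simp only [e3]
  rw [herase] at hsum
  have hmain := add_right_cancel hsum
  rw [Finset.prod_singleton, Finset.prod_singleton] at hmain
  have hcard : (Finset.univ : Finset (Fin n)).card = n := by simp
  rw [restr_univ χ hcard, restr_univ (fun i => star (a i)) hcard,
    restr_univ (fun i => χ i.rev) hcard, restr_univ (fun i => a i.rev) hcard] at hmain
  rw [kcast κ hcard χ (fun i => star (a i)),
    kcast κ hcard (fun i => χ i.rev) (fun i => a i.rev)]
  exact hmain
end
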